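/- arXiv:2211.08797 — 11 statements merged into one kernel-verified Lean document; each statement's English description precedes it below -/
import Mathlib

section
/- The 3×3 matrix F·V⁻¹, where F has first row (βS0, βS0, 0) and all other entries zero, and V is the lower-triangular matrix with diagonal (μ+ω+δ1, μ+δ2, μ+δ3+ρ) and subdiagonal entries V₂₁ = -σω, V₃₁ = -(1-σ)(1-θ)ω, V₃₂ = 0, has characteristic polynomial X²(X - R0); in particular its spectral radius equals R0 = (βS0/(μ+ω+δ1))·(1 + σω/(μ+δ2)). -/
open Set Polynomial

set_option maxHeartbeats 1600000

lemma mem_spectrum_iff_eval_ngm (M : Matrix (Fin 3) (Fin 3) ℝ) (x : ℝ) :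
    x ∈ spectrum ℝ M ↔ M.charpoly.eval x = 0 := by
  rw [spectrum.mem_iff, Matrix.isUnit_iff_isUnit_det, isUnit_iff_ne_zero, not_not,
    Matrix.charpoly, _root_.eval_det, Matrix.matPolyEquiv_charmatrix]
  simp [Polynomial.eval_sub, Matrix.scalar, Matrix.algebraMap_eq_diagonal]

/-- The next generation matrix F·V⁻¹ has characteristic polynomial X²(X - R0);
in particular its spectral radius equals R0 = (βS0/(μ+ω+δ1))·(1 + σω/(μ+δ2)). -/
theorem next_generation_matrix_spectral_radius
    (Λ β μ ω ρ ξ δ1 δ2 δ3 p σ θ : ℝ)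
    (hΛ : 0 < Λ) (hβ : 0 < β) (hμ : 0 < μ) (hω : 0 < ω) (hρ : 0 < ρ)
    (hξ : 0 < ξ) (hδ1 : 0 < δ1) (hδ2 : 0 < δ2) (hδ3 : 0 < δ3)
    (hp : p ∈ Ico (0:ℝ) 1) (hσ : σ ∈ Icc (0:ℝ) 1) (hθ : θ ∈ Icc (0:ℝ) 1)
    (S0 R0 : ℝ)
    (hS0 : S0 = Λ * (μ * (1 - p) + ξ) / (μ * (μ + ξ)))
    (hR0 : R0 = β * Λ * (μ * (1 - p) + ξ) / (μ * (μ + ξ) * (μ + ω + δ1))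
        * (1 + σ * ω / (μ + δ2)))
    (F V : Matrix (Fin 3) (Fin 3) ℝ)
    (hF : F = !![β * S0, β * S0, 0; 0, 0, 0; 0, 0, 0])
    (hV : V = !![μ + ω + δ1, 0, 0;
                 -(σ * ω), μ + δ2, 0;
                 -((1 - σ) * (1 - θ) * ω), 0, μ + δ3 + ρ]) :
    (F * V⁻¹).charpoly = X ^ 2 * (X - C R0)
      ∧ R0 ∈ spectrum ℝ (F * V⁻¹)
      ∧ ∀ x ∈ spectrum ℝ (F * V⁻¹), |x| ≤ R0 := by
  have hd1 : (0:ℝ) < μ + ω + δ1 := by linarith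
  have hd2 : (0:ℝ) < μ + δ2 := by linarith
  have hd3 : (0:ℝ) < μ + δ3 + ρ := by linarith
  have hd1' := hd1.ne'
  have hd2' := hd2.ne'
  have hd3' := hd3.ne'
  have hμξ : (0:ℝ) < μ * (μ + ξ) := by positivity
  have hμξ' := hμξ.ne'
  have h1p : (0:ℝ) < 1 - p := by linarith [hp.2]
  have hnum : (0:ℝ) < μ * (1 - p) + ξ := by nlinarith
  have hR0pos : 0 < R0 := by
    rw [hR0]
    have h1 : 0 < β * Λ * (μ * (1 - p) + ξ) / (μ * (μ + ξ) * (μ + ω + δ1)) := by positivity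
    have h2 : (0:ℝ) < 1 + σ * ω / (μ + δ2) := by
      have h3 : 0 ≤ σ * ω / (μ + δ2) := div_nonneg (mul_nonneg hσ.1 hω.le) hd2.le
      linarith
    exact mul_pos h1 h2
  set W : Matrix (Fin 3) (Fin 3) ℝ :=
    !![1 / (μ + ω + δ1), 0, 0;
       σ * ω / ((μ + ω + δ1) * (μ + δ2)), 1 / (μ + δ2), 0;
       (1 - σ) * (1 - θ) * ω / ((μ + ω + δ1) * (μ + δ3 + ρ)), 0, 1 / (μ + δ3 + ρ)] with hW
  have hVW : V * W = 1 := by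
    rw [hV, hW, Matrix.mul_fin_three, Matrix.one_fin_three]
    ext x y
    fin_cases x <;> fin_cases y <;> simp [Matrix.vecHead, Matrix.vecTail] <;>
      field_simp <;> ring
  have hVinv : V⁻¹ = W := Matrix.inv_eq_right_inv hVW
  have hM : F * V⁻¹ = !![R0, β * S0 / (μ + δ2), 0; 0, 0, 0; 0, 0, 0] := by
    rw [hVinv, hF, hW, Matrix.mul_fin_three]
    ext x y
    fin_cases x <;> fin_cases y <;>
      simp [Matrix.vecHead, Matrix.vecTail, hS0, hR0] <;> field_simp <;> ring
  have hcp : (F * V⁻¹).charpoly = X ^ 2 * (X - C R0) := by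
    rw [hM, Matrix.charpoly, Matrix.det_fin_three]
    simp [Matrix.charmatrix_apply, Matrix.diagonal_apply, Matrix.vecHead, Matrix.vecTail]
    ring
  refine ⟨hcp, ?_, ?_⟩
  · rw [mem_spectrum_iff_eval_ngm, hcp]
    simp
  · intro x hx
    rw [mem_spectrum_iff_eval_ngm, hcp] at hx
    simp only [eval_mul, eval_pow, eval_sub, eval_X, eval_C, mul_eq_zero,
      pow_eq_zero_iff, sub_eq_zero] at hx
    rcases hx with h | h
    · have hx0 : x = 0 := by nlinarith [sq_nonneg x, sq_abs x]
      rw [hx0, abs_zero]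
      exact hR0pos.le
    · rw [h, abs_of_pos hR0pos]
end

section
/- For the 2×2 matrix J' with rows (βS0 - (μ+ω+δ1), βS0) and (σω, -(μ+δ2)), the determinant satisfies Det(J') = (μ+δ2)(μ+ω+δ1)(1 - R0), and Tr(J') < 0 together with Det(J') > 0 holds if and only if R0 < 1. Consequently, every complex eigenvalue of the 5×5 Jacobian of system (1) (with q = 0) at the disease-free equilibrium E0, namely the block matrix with eigenvalues -μ, -(μ+ξ), -(μ+δ3+ρ) and the eigenvalues of J', has negative real part if and only if R0 < 1, and some eigenvalue has positive real part if R0 > 1. -/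
open Set

lemma det5_aux (x p1 p2 g b B c d e f r s : ℂ) :
    Matrix.det !![x, p1, p2, 0, g;
                  0, b, B, 0, 0;
                  0, c, d, 0, 0;
                  0, e, 0, f, 0;
                  0, 0, 0, r, s] = x * f * s * (b*d - B*c) := by
  simp [Matrix.det_succ_row_zero, Fin.sum_univ_succ, Fin.succAbove]
  ring

lemma quad_re_neg (T D : ℝ) (hT : T < 0) (hD : 0 < D) (z : ℂ)
    (hz : z^2 - (T:ℂ)*z + (D:ℂ) = 0) : z.re < 0 := by
  have h1 : z.re^2 - z.im^2 - T*z.re + D = 0 := by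
    have := congrArg Complex.re hz
    simpa [pow_two, Complex.mul_re, Complex.mul_im] using this
  have h2 : z.im * (2*z.re - T) = 0 := by
    have := congrArg Complex.im hz
    simp [pow_two, Complex.mul_re, Complex.mul_im] at this
    linarith
  rcases mul_eq_zero.mp h2 with h|h
  · rw [h] at h1
    nlinarith
  · linarith

lemma quad_root_nonneg (T D : ℝ) (hD : D ≤ 0) :
    ∃ x : ℝ, 0 ≤ x ∧ (D < 0 → 0 < x) ∧ x^2 - T*x + D = 0 := by
  have hdisc : 0 ≤ T^2 - 4*D := by nlinarith
  set s := Real.sqrt (T^2 - 4*D) with hs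
  have hs0 : 0 ≤ s := Real.sqrt_nonneg _
  have hs2 : s^2 = T^2 - 4*D := Real.sq_sqrt hdisc
  refine ⟨(T + s)/2, ?_, ?_, by nlinarith⟩
  · nlinarith
  · intro h; nlinarith

set_option maxHeartbeats 2000000 in
/-- Det(J') = (μ+δ2)(μ+ω+δ1)(1-R0); Tr(J') < 0 and Det(J') > 0 hold iff R0 < 1.
Consequently all eigenvalues of the 5×5 Jacobian of system (1) (q = 0) at the
disease-free equilibrium have negative real part iff R0 < 1, and some eigenvalue
has positive real part if R0 > 1. -/
theorem local_stability_DFE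
    (Λ β μ ω ρ ξ δ1 δ2 δ3 p σ θ : ℝ)
    (hΛ : 0 < Λ) (hβ : 0 < β) (hμ : 0 < μ) (hω : 0 < ω) (hρ : 0 < ρ)
    (hξ : 0 < ξ) (hδ1 : 0 < δ1) (hδ2 : 0 < δ2) (hδ3 : 0 < δ3)
    (hp : p ∈ Ico (0:ℝ) 1) (hσ : σ ∈ Icc (0:ℝ) 1) (hθ : θ ∈ Icc (0:ℝ) 1)
    (S0 R0 : ℝ)
    (hS0 : S0 = Λ * (μ * (1 - p) + ξ) / (μ * (μ + ξ)))
    (hR0 : R0 = β * Λ * (μ * (1 - p) + ξ) / (μ * (μ + ξ) * (μ + ω + δ1))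
        * (1 + σ * ω / (μ + δ2)))
    (J' : Matrix (Fin 2) (Fin 2) ℝ)
    (hJ' : J' = !![β * S0 - (μ + ω + δ1), β * S0; σ * ω, -(μ + δ2)])
    (J5 : Matrix (Fin 5) (Fin 5) ℝ)
    (hJ5 : J5 = !![-μ, -(β * S0), -(β * S0), 0, ξ;
                   0, β * S0 - (μ + ω + δ1), β * S0, 0, 0;
                   0, σ * ω, -(μ + δ2), 0, 0;
                   0, (1 - σ) * (1 - θ) * ω, 0, -(μ + δ3 + ρ), 0;
                   0, 0, 0, ρ, -(μ + ξ)]) :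
    J'.det = (μ + δ2) * (μ + ω + δ1) * (1 - R0)
      ∧ ((J'.trace < 0 ∧ 0 < J'.det) ↔ R0 < 1)
      ∧ ((∀ z ∈ spectrum ℂ (J5.map (Complex.ofReal)), z.re < 0) ↔ R0 < 1)
      ∧ (1 < R0 → ∃ z ∈ spectrum ℂ (J5.map (Complex.ofReal)), 0 < z.re) := by
  have hμ0 : μ ≠ 0 := ne_of_gt hμ
  have hμξ : μ + ξ ≠ 0 := by positivity
  have hμδ2 : (0:ℝ) < μ + δ2 := by linarith
  have hμδ2' : μ + δ2 ≠ 0 := ne_of_gt hμδ2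
  have hK : (0:ℝ) < μ + ω + δ1 := by linarith
  have hS0pos : 0 < S0 := by
    rw [hS0]
    apply div_pos
    · have h1p : 0 < 1 - p := by linarith [hp.2]
      have h2 : 0 < μ * (1 - p) + ξ := by nlinarith [mul_pos hμ h1p]
      exact mul_pos hΛ h2
    · positivity
  have hβS0 : 0 < β * S0 := mul_pos hβ hS0pos
  -- key algebraic identities
  set Tr : ℝ := β * S0 - (μ + ω + δ1) - (μ + δ2) with hTrdef
  set D0 : ℝ := -((β * S0 - (μ + ω + δ1)) * (μ + δ2)) - β * S0 * (σ * ω) with hD0def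
  have hD0 : D0 = (μ + δ2) * (μ + ω + δ1) * (1 - R0) := by
    rw [hD0def, hS0, hR0]
    field_simp
    ring
  have hDet : J'.det = (μ + δ2) * (μ + ω + δ1) * (1 - R0) := by
    rw [hJ', Matrix.det_fin_two_of, ← hD0, hD0def]
    ring
  have hTrace : J'.trace = Tr := by
    rw [hJ', Matrix.trace_fin_two_of, hTrdef]
    ring
  -- R0 vs D0
  have hD0pos : R0 < 1 ↔ 0 < D0 := by
    rw [hD0]
    constructor
    · intro h; have : 0 < 1 - R0 := by linarith
      positivity
    · intro h; nlinarith [mul_pos hμδ2 hK]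
  -- R0 < 1 implies Tr < 0
  have hR0K : R0 * ((μ + ω + δ1) * (μ + δ2)) = β * S0 * ((μ + δ2) + σ * ω) := by
    rw [hR0, hS0]; field_simp
  have hTrneg : R0 < 1 → Tr < 0 := by
    intro h
    have hσω : 0 ≤ β * S0 * (σ * ω) := by
      have := hσ.1
      positivity
    have hlt : β * S0 * (μ + δ2) < (μ + ω + δ1) * (μ + δ2) := by
      nlinarith [mul_pos (show (0:ℝ) < 1 - R0 by linarith) (mul_pos hK hμδ2)]
    have : β * S0 < μ + ω + δ1 := by
      exact lt_of_mul_lt_mul_right (by linarith) hμδ2.le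
    rw [hTrdef]; linarith
  -- spectrum characterization
  have hspec : ∀ z : ℂ, z ∈ spectrum ℂ (J5.map (Complex.ofReal)) ↔
      (z + μ) * (z + (μ+δ3+ρ)) * (z + (μ+ξ)) *
        (z^2 - (Tr:ℂ)*z + (D0:ℂ)) = 0 := by
    intro z
    have hmat : algebraMap ℂ (Matrix (Fin 5) (Fin 5) ℂ) z - J5.map (Complex.ofReal) =
        !![z + (μ:ℂ), ((β*S0 : ℝ):ℂ), ((β*S0 : ℝ):ℂ), 0, -(ξ:ℂ);
           0, z - ((β*S0 - (μ+ω+δ1) : ℝ):ℂ), -((β*S0 : ℝ):ℂ), 0, 0;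
           0, -((σ*ω : ℝ):ℂ), z + ((μ+δ2 : ℝ):ℂ), 0, 0;
           0, -(((1-σ)*(1-θ)*ω : ℝ):ℂ), 0, z + ((μ+δ3+ρ : ℝ):ℂ), 0;
           0, 0, 0, -(ρ:ℂ), z + ((μ+ξ : ℝ):ℂ)] := by
      ext i j
      fin_cases i <;> fin_cases j <;>
        simp [Matrix.algebraMap_matrix_apply, hJ5, Matrix.map_apply,
          Matrix.vecHead, Matrix.vecTail] <;> push_cast <;> ring
    rw [spectrum.mem_iff, Matrix.isUnit_iff_isUnit_det, isUnit_iff_ne_zero, not_not,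
      hmat, det5_aux]
    constructor
    · intro h
      rw [← h, hTrdef, hD0def]; push_cast; ring
    · intro h
      rw [← h, hTrdef, hD0def]; push_cast; ring
  refine ⟨hDet, ?_, ?_, ?_⟩
  · constructor
    · rintro ⟨-, hd⟩
      rw [hDet] at hd
      nlinarith [mul_pos hμδ2 hK]
    · intro h
      refine ⟨by rw [hTrace]; exact hTrneg h, ?_⟩
      rw [hDet]
      have : 0 < 1 - R0 := by linarith
      positivity
  · constructor
    · intro hall
      by_contra hnot
      push_neg at hnot
      have hD0le : D0 ≤ 0 := by
        by_contra h
        push_neg at h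
        exact absurd (hD0pos.mpr h) (not_lt.mpr hnot)
      obtain ⟨x, hx0, -, hxroot⟩ := quad_root_nonneg Tr D0 hD0le
      have hz : (x:ℂ) ∈ spectrum ℂ (J5.map (Complex.ofReal)) := by
        rw [hspec]
        have : ((x:ℂ))^2 - (Tr:ℂ)*(x:ℂ) + (D0:ℂ) = 0 := by
          exact_mod_cast congrArg (Complex.ofReal) hxroot
        rw [this, mul_zero]
      have := hall _ hz
      simp at this
      linarith
    · intro h z hz
      rw [hspec z] at hz
      have hT : Tr < 0 := hTrneg h
      have hD : 0 < D0 := hD0pos.mp h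
      rcases mul_eq_zero.mp hz with h1 | hq
      · rcases mul_eq_zero.mp h1 with h2 | h3
        · rcases mul_eq_zero.mp h2 with h4 | h5
          · have : z = -(μ:ℂ) := by linear_combination h4
            rw [this]; simp [hμ]
          · have : z = -((μ+δ3+ρ : ℝ):ℂ) := by push_cast; linear_combination h5
            rw [this]; simp; linarith
        · have : z = -((μ+ξ : ℝ):ℂ) := by push_cast; linear_combination h3
          rw [this]; simp; linarith
      · exact quad_re_neg Tr D0 hT hD z hq
  · intro h
    have hD0neg : D0 < 0 := by
      rw [hD0]
      have : 1 - R0 < 0 := by linarith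
      nlinarith [mul_pos hμδ2 hK]
    obtain ⟨x, -, hxpos, hxroot⟩ := quad_root_nonneg Tr D0 hD0neg.le
    refine ⟨(x:ℂ), ?_, by simpa using hxpos hD0neg⟩
    rw [hspec]
    have : ((x:ℂ))^2 - (Tr:ℂ)*(x:ℂ) + (D0:ℂ) = 0 := by
      exact_mod_cast congrArg (Complex.ofReal) hxroot
    rw [this, mul_zero]
end

section
/- If p > 0, then regarding R0 as a function of the waning-immunity rate ξ > 0, its derivative is dR0/dξ = βΛp(δ2+μ+σω)/((δ2+μ)(μ+ξ)²(δ1+μ+ω)) > 0; i.e., waning immunity strictly increases the basic reproduction number. -/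
open Set

/-- If p > 0, then dR0/dξ = βΛp(δ2+μ+σω)/((δ2+μ)(μ+ξ)²(δ1+μ+ω)) > 0: waning
immunity strictly increases the basic reproduction number. -/
theorem R0_increasing_in_waning_immunity
    (Λ β μ ω ρ δ1 δ2 δ3 p σ : ℝ)
    (hΛ : 0 < Λ) (hβ : 0 < β) (hμ : 0 < μ) (hω : 0 < ω) (hρ : 0 < ρ)
    (hδ1 : 0 < δ1) (hδ2 : 0 < δ2) (hδ3 : 0 < δ3)
    (hp : p ∈ Ioo (0:ℝ) 1) (hσ : σ ∈ Icc (0:ℝ) 1)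
    (R0 : ℝ → ℝ)
    (hR0 : ∀ ξ, R0 ξ = β * Λ * (μ * (1 - p) + ξ) / (μ * (μ + ξ) * (μ + ω + δ1))
        * (1 + σ * ω / (μ + δ2))) :
    ∀ ξ > (0:ℝ),
      HasDerivAt R0
        (β * Λ * p * (δ2 + μ + σ * ω) / ((δ2 + μ) * (μ + ξ) ^ 2 * (δ1 + μ + ω))) ξ
      ∧ 0 < β * Λ * p * (δ2 + μ + σ * ω) / ((δ2 + μ) * (μ + ξ) ^ 2 * (δ1 + μ + ω)) := by
  intro ξ hξ
  have hμξ : (0:ℝ) < μ + ξ := by linarith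
  have hd1 : (0:ℝ) < δ1 + μ + ω := by linarith
  have hd2 : (0:ℝ) < δ2 + μ := by linarith
  have hσω : (0:ℝ) ≤ σ * ω := mul_nonneg hσ.1 hω.le
  constructor
  · have hR0eq : R0 = fun ξ => β * Λ * (μ * (1 - p) + ξ) / (μ * (μ + ξ) * (μ + ω + δ1))
        * (1 + σ * ω / (μ + δ2)) := funext hR0
    rw [hR0eq]
    have hnum : HasDerivAt (fun ξ : ℝ => β * Λ * (μ * (1 - p) + ξ)) (β * Λ * 1) ξ :=
      ((hasDerivAt_id ξ).const_add (μ * (1 - p))).const_mul (β * Λ)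
    have hden : HasDerivAt (fun ξ : ℝ => μ * (μ + ξ) * (μ + ω + δ1))
        (μ * 1 * (μ + ω + δ1)) ξ :=
      (((hasDerivAt_id ξ).const_add μ).const_mul μ).mul_const (μ + ω + δ1)
    have hden_ne : μ * (μ + ξ) * (μ + ω + δ1) ≠ 0 := by positivity
    have h := (hnum.div hden hden_ne).mul_const (1 + σ * ω / (μ + δ2))
    refine h.congr_deriv ?_
    have h1 : (μ + ξ) ≠ 0 := ne_of_gt hμξ
    have h2 : (μ + δ2) ≠ 0 := by positivity
    have h3 : (δ2 + μ) ≠ 0 := ne_of_gt hd2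
    have h4 : (δ1 + μ + ω) ≠ 0 := ne_of_gt hd1
    have h5 : (μ + ω + δ1) ≠ 0 := by positivity
    field_simp
    ring
  · have hnum : (0:ℝ) < β * Λ * p * (δ2 + μ + σ * ω) :=
      mul_pos (mul_pos (mul_pos hβ hΛ) hp.1) (by linarith)
    exact div_pos hnum (by positivity)
end

section
/- For positive parameters with σ, θ ∈ [0,1], the quantity I* = (R0 − 1)/[(1 + σω/(μ+δ2))·(1 − ρξ(1-σ)(1-θ)ω/((μ+δ3+ρ)(μ+ξ)(μ+ω+δ1)))] is well defined (the second factor in the denominator is strictly positive) and satisfies I* > 0 if and only if R0 > 1; hence the endemic equilibrium E* of model (1) with q = 0 exists if and only if R0 > 1. -/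
open Set

/-!
The second factor of the denominator of `I*` is `1 - N / D` with `N = ρ ξ (1-σ)(1-θ) ω`
and `D = (μ+δ3+ρ)(μ+ξ)(μ+ω+δ1)`. Since `(1-σ)(1-θ) ≤ 1` and each of `ρ, ξ, ω` is strictly
smaller than the corresponding factor of `D`, we get `N < D`, so the factor is positive.
The first factor `1 + σω/(μ+δ2)` is positive as well, hence `I*` has the sign of `R0 - 1`.
-/

theorem mul_mul_lt_mul_mul {α : Type*} [Semiring α] [PartialOrder α] [IsStrictOrderedRing α]
    {a b c A B C : α} (ha : 0 ≤ a) (hb : 0 ≤ b) (hc : 0 ≤ c)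
    (haA : a < A) (hbB : b < B) (hcC : c < C) : a * b * c < A * B * C :=
  mul_lt_mul'' (mul_lt_mul'' haA hbB ha hb) hcC (mul_nonneg ha hb) hc

theorem one_sub_mul_one_sub_le_one {σ θ : ℝ} (hσ : σ ∈ Icc (0 : ℝ) 1) (hθ : θ ∈ Icc (0 : ℝ) 1) :
    (1 - σ) * (1 - θ) ≤ 1 :=
  mul_le_one₀ (by linarith [hσ.1]) (by linarith [hθ.2]) (by linarith [hθ.1])

section EndemicDenominator

variable {μ ω ρ ξ δ1 δ3 σ θ : ℝ}

theorem reinfection_numerator_lt (hμ : 0 < μ) (hω : 0 < ω) (hρ : 0 < ρ) (hξ : 0 < ξ)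
    (hδ1 : 0 < δ1) (hδ3 : 0 < δ3) (hσ : σ ∈ Icc (0 : ℝ) 1) (hθ : θ ∈ Icc (0 : ℝ) 1) :
    ρ * ξ * (1 - σ) * (1 - θ) * ω < (μ + δ3 + ρ) * (μ + ξ) * (μ + ω + δ1) :=
  calc ρ * ξ * (1 - σ) * (1 - θ) * ω = ρ * ξ * ω * ((1 - σ) * (1 - θ)) := by ring
    _ ≤ ρ * ξ * ω :=
        mul_le_of_le_one_right (by positivity) (one_sub_mul_one_sub_le_one hσ hθ)
    _ < (μ + δ3 + ρ) * (μ + ξ) * (μ + ω + δ1) :=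
        mul_mul_lt_mul_mul hρ.le hξ.le hω.le (by linarith) (by linarith) (by linarith)

theorem one_sub_reinfection_ratio_pos (hμ : 0 < μ) (hω : 0 < ω) (hρ : 0 < ρ) (hξ : 0 < ξ)
    (hδ1 : 0 < δ1) (hδ3 : 0 < δ3) (hσ : σ ∈ Icc (0 : ℝ) 1) (hθ : θ ∈ Icc (0 : ℝ) 1) :
    0 < 1 - ρ * ξ * (1 - σ) * (1 - θ) * ω / ((μ + δ3 + ρ) * (μ + ξ) * (μ + ω + δ1)) :=
  sub_pos.2 <| (div_lt_one (by positivity)).2 <|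
    reinfection_numerator_lt hμ hω hρ hξ hδ1 hδ3 hσ hθ

end EndemicDenominator

theorem endemic_equilibrium_exists_iff_R0_gt_one_general
    (μ ω ρ ξ δ1 δ2 δ3 σ θ : ℝ)
    (hμ : 0 < μ) (hω : 0 < ω) (hρ : 0 < ρ)
    (hξ : 0 < ξ) (hδ1 : 0 < δ1) (hδ2 : 0 < δ2) (hδ3 : 0 < δ3)
    (hσ : σ ∈ Icc (0:ℝ) 1) (hθ : θ ∈ Icc (0:ℝ) 1)
    (R0 Istar : ℝ)
    (hIstar : Istar = (R0 - 1) / ((1 + σ * ω / (μ + δ2))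
        * (1 - ρ * ξ * (1 - σ) * (1 - θ) * ω
            / ((μ + δ3 + ρ) * (μ + ξ) * (μ + ω + δ1))))) :
    0 < 1 - ρ * ξ * (1 - σ) * (1 - θ) * ω / ((μ + δ3 + ρ) * (μ + ξ) * (μ + ω + δ1))
      ∧ (0 < Istar ↔ 1 < R0) := by
  have hfactor := one_sub_reinfection_ratio_pos hμ hω hρ hξ hδ1 hδ3 hσ hθ
  have hscale : 0 < 1 + σ * ω / (μ + δ2) := by
    have := hσ.1
    positivity
  refine ⟨hfactor, ?_⟩
  rw [hIstar, div_pos_iff_of_pos_right (mul_pos hscale hfactor), sub_pos]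

/-- I* is well defined (the second factor of its denominator is positive) and
I* > 0 iff R0 > 1; hence the endemic equilibrium of model (1) with q = 0 exists
iff R0 > 1. -/
theorem endemic_equilibrium_exists_iff_R0_gt_one
    (Λ β μ ω ρ ξ δ1 δ2 δ3 p σ θ : ℝ)
    (hΛ : 0 < Λ) (hβ : 0 < β) (hμ : 0 < μ) (hω : 0 < ω) (hρ : 0 < ρ)
    (hξ : 0 < ξ) (hδ1 : 0 < δ1) (hδ2 : 0 < δ2) (hδ3 : 0 < δ3)
    (hp : p ∈ Ico (0:ℝ) 1) (hσ : σ ∈ Icc (0:ℝ) 1) (hθ : θ ∈ Icc (0:ℝ) 1)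
    (R0 Istar : ℝ)
    (hR0 : R0 = β * Λ * (μ * (1 - p) + ξ) / (μ * (μ + ξ) * (μ + ω + δ1))
        * (1 + σ * ω / (μ + δ2)))
    (hIstar : Istar = (R0 - 1) / ((1 + σ * ω / (μ + δ2))
        * (1 - ρ * ξ * (1 - σ) * (1 - θ) * ω
            / ((μ + δ3 + ρ) * (μ + ξ) * (μ + ω + δ1))))) :
    0 < 1 - ρ * ξ * (1 - σ) * (1 - θ) * ω / ((μ + δ3 + ρ) * (μ + ξ) * (μ + ω + δ1))
      ∧ (0 < Istar ↔ 1 < R0) :=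
  endemic_equilibrium_exists_iff_R0_gt_one_general μ ω ρ ξ δ1 δ2 δ3 σ θ hμ hω hρ hξ hδ1 hδ2 hδ3 hσ
    hθ R0 Istar hIstar
end

section
/- For any q > 0 and positive parameters with σ, θ ∈ [0,1], the quadratic P(I) = A1·I² + A2·I + A3 with A1 = (β/μ)·(ρξ(1-σ)(1-θ)ω/((μ+δ3+ρ)(μ+ξ)(μ+ω+δ1)) − 1)·(1 + σω/(μ+δ2))·(μ+ω+δ1) < 0, A2 = (μ+ω+δ1)(R0 − 1), and A3 = qΛ > 0 has exactly one strictly positive real root (and one strictly negative real root), regardless of whether R0 < 1, R0 = 1, or R0 > 1; hence model (1) with q ≠ 0 always has a unique endemic equilibrium. -/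
/-!
The leading coefficient `A1` is negative because the ratio in it is below one (each factor
of its numerator is dominated by the matching factor of its denominator), and `A3 = qΛ` is
positive. A real quadratic whose leading and constant coefficients have opposite signs has
two real roots with negative product `A3 / A1`, so exactly one of them is positive.
-/

open Set

theorem exists_roots_neg_pos_of_mul_neg {a b c : ℝ} (h : a * c < 0) :
    ∃ r₁ r₂ : ℝ, r₁ < 0 ∧ 0 < r₂ ∧ ∀ x, a * x ^ 2 + b * x + c = 0 ↔ x = r₁ ∨ x = r₂ := by
  have ha : a ≠ 0 := by
    rintro rfl
    simp at h
  set s := √(discrim a b c)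
  have hs : discrim a b c = s * s :=
    (Real.mul_self_sqrt (by rw [discrim]; nlinarith [sq_nonneg b])).symm
  have hbs : |b| < s :=
    abs_lt_of_sq_lt_sq (by rw [sq s, ← hs, discrim]; linarith) (Real.sqrt_nonneg _)
  obtain ⟨hsb, hbs⟩ := abs_lt.1 hbs
  have hroots (x : ℝ) :
      a * x ^ 2 + b * x + c = 0 ↔ x = (-b + s) / (2 * a) ∨ x = (-b - s) / (2 * a) := by
    rw [sq]
    exact quadratic_eq_zero_iff ha hs x
  rcases ha.lt_or_gt with ha | ha
  · exact ⟨(-b + s) / (2 * a), (-b - s) / (2 * a),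
      div_neg_of_pos_of_neg (by linarith) (by linarith),
      div_pos_of_neg_of_neg (by linarith) (by linarith), hroots⟩
  · exact ⟨(-b - s) / (2 * a), (-b + s) / (2 * a),
      div_neg_of_neg_of_pos (by linarith) (by linarith),
      div_pos (by linarith) (by linarith), fun x => (hroots x).trans or_comm⟩

theorem existsUnique_pos_root_and_neg_root_of_mul_neg {a b c : ℝ} (h : a * c < 0) :
    (∃! x : ℝ, 0 < x ∧ a * x ^ 2 + b * x + c = 0)
      ∧ (∃! x : ℝ, x < 0 ∧ a * x ^ 2 + b * x + c = 0) := by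
  obtain ⟨r₁, r₂, hr₁, hr₂, hroots⟩ := exists_roots_neg_pos_of_mul_neg (b := b) h
  refine ⟨⟨r₂, ⟨hr₂, (hroots r₂).2 (Or.inr rfl)⟩, fun x ⟨hx, hroot⟩ => ?_⟩,
    ⟨r₁, ⟨hr₁, (hroots r₁).2 (Or.inl rfl)⟩, fun x ⟨hx, hroot⟩ => ?_⟩⟩
  · exact ((hroots x).1 hroot).resolve_left (by rintro rfl; linarith)
  · exact ((hroots x).1 hroot).resolve_right (by rintro rfl; linarith)

theorem damped_product_div_lt_one {μ ω ρ ξ δ1 δ3 σ θ : ℝ} (hμ : 0 < μ) (hω : 0 < ω)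
    (hρ : 0 < ρ) (hξ : 0 < ξ) (hδ1 : 0 < δ1) (hδ3 : 0 < δ3)
    (hσ : σ ∈ Icc (0:ℝ) 1) (hθ : θ ∈ Icc (0:ℝ) 1) :
    ρ * ξ * (1 - σ) * (1 - θ) * ω / ((μ + δ3 + ρ) * (μ + ξ) * (μ + ω + δ1)) < 1 := by
  rw [div_lt_one (by positivity)]
  have hdamp : (1 - σ) * (1 - θ) ≤ 1 :=
    mul_le_one₀ (by linarith [hσ.1]) (by linarith [hθ.2]) (by linarith [hθ.1])
  calc ρ * ξ * (1 - σ) * (1 - θ) * ω = ρ * ξ * ω * ((1 - σ) * (1 - θ)) := by ring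
    _ ≤ ρ * ξ * ω := mul_le_of_le_one_right (by positivity) hdamp
    _ < (μ + δ3 + ρ) * (μ + ξ) * (μ + ω + δ1) := by gcongr <;> linarith

theorem unique_endemic_equilibrium_immigration_general
    (Λ β μ ω ρ ξ δ1 δ2 δ3 q σ θ : ℝ)
    (hΛ : 0 < Λ) (hβ : 0 < β) (hμ : 0 < μ) (hω : 0 < ω) (hρ : 0 < ρ)
    (hξ : 0 < ξ) (hδ1 : 0 < δ1) (hδ2 : 0 < δ2) (hδ3 : 0 < δ3)
    (hq : q ∈ Ioc (0:ℝ) 1)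
    (hσ : σ ∈ Icc (0:ℝ) 1) (hθ : θ ∈ Icc (0:ℝ) 1)
    (A1 A2 A3 : ℝ)
    (hA1 : A1 = β / μ
        * (ρ * ξ * (1 - σ) * (1 - θ) * ω / ((μ + δ3 + ρ) * (μ + ξ) * (μ + ω + δ1)) - 1)
        * (1 + σ * ω / (μ + δ2)) * (μ + ω + δ1))
    (hA3 : A3 = q * Λ) :
    A1 < 0 ∧ 0 < A3
      ∧ (∃! x : ℝ, 0 < x ∧ A1 * x ^ 2 + A2 * x + A3 = 0)
      ∧ (∃! x : ℝ, x < 0 ∧ A1 * x ^ 2 + A2 * x + A3 = 0) := by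
  have hratio := damped_product_div_lt_one hμ hω hρ hξ hδ1 hδ3 hσ hθ
  have hA1neg : A1 < 0 := by
    have hσ0 := hσ.1
    rw [hA1]
    exact mul_neg_of_neg_of_pos
      (mul_neg_of_neg_of_pos (mul_neg_of_pos_of_neg (by positivity) (by linarith))
        (by positivity))
      (by positivity)
  have hA3pos : 0 < A3 := hA3 ▸ mul_pos hq.1 hΛ
  exact ⟨hA1neg, hA3pos,
    existsUnique_pos_root_and_neg_root_of_mul_neg (mul_neg_of_neg_of_pos hA1neg hA3pos)⟩

/-- For q > 0, the quadratic P(I) = A1·I² + A2·I + A3 (A1 < 0, A3 = qΛ > 0) has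
exactly one strictly positive real root and exactly one strictly negative real
root, regardless of the value of R0; hence model (1) with q ≠ 0 always has a
unique endemic equilibrium. -/
theorem unique_endemic_equilibrium_immigration
    (Λ β μ ω ρ ξ δ1 δ2 δ3 p q σ θ : ℝ)
    (hΛ : 0 < Λ) (hβ : 0 < β) (hμ : 0 < μ) (hω : 0 < ω) (hρ : 0 < ρ)
    (hξ : 0 < ξ) (hδ1 : 0 < δ1) (hδ2 : 0 < δ2) (hδ3 : 0 < δ3)
    (hq : q ∈ Ioc (0:ℝ) 1) (hp : 0 ≤ p) (hpq : p + q ≤ 1)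
    (hσ : σ ∈ Icc (0:ℝ) 1) (hθ : θ ∈ Icc (0:ℝ) 1)
    (R0 A1 A2 A3 : ℝ)
    (hR0 : R0 = β * Λ * (μ * (1 - p) + ξ) / (μ * (μ + ξ) * (μ + ω + δ1))
        * (1 + σ * ω / (μ + δ2)))
    (hA1 : A1 = β / μ
        * (ρ * ξ * (1 - σ) * (1 - θ) * ω / ((μ + δ3 + ρ) * (μ + ξ) * (μ + ω + δ1)) - 1)
        * (1 + σ * ω / (μ + δ2)) * (μ + ω + δ1))
    (hA2 : A2 = (μ + ω + δ1) * (R0 - 1))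
    (hA3 : A3 = q * Λ) :
    A1 < 0 ∧ 0 < A3
      ∧ (∃! x : ℝ, 0 < x ∧ A1 * x ^ 2 + A2 * x + A3 = 0)
      ∧ (∃! x : ℝ, x < 0 ∧ A1 * x ^ 2 + A2 * x + A3 = 0) :=
  unique_endemic_equilibrium_immigration_general Λ β μ ω ρ ξ δ1 δ2 δ3 q σ θ hΛ hβ hμ hω hρ hξ hδ1
    hδ2 hδ3 hq hσ hθ A1 A2 A3 hA1 hA3
end

section
/- At the bifurcation value β* = (μ+ω+δ1)(μ+δ2)/(S0(μ+δ2+σω)) (where R0 = 1), the bifurcation constants a = 2·v2·w1·(w2+w3)·β* and b = 2·v2·S0·(w2+w3), computed from the eigenvector components v2 = (μ+σω+δ2)/(μ+ω+δ1) > 0, w1 = ξ/μ − (μ+ξ)(μ+ω+δ1)(μ+ρ+δ3)/(μρ(1-σ)(1-θ)ω), w2 = (μ+ξ)(μ+ρ+δ3)/(ρ(1-σ)(1-θ)ω) > 0 and w3 = σ(μ+ξ)(μ+ρ+δ3)/(ρ(1-σ)(1-θ)(μ+δ2)²·ω/ω) > 0, satisfy w1 < 0, a < 0 and b > 0; hence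 the transcritical bifurcation of system (1) at the disease-free equilibrium when R0 = 1 is forward. -/
open Set

set_option maxHeartbeats 1600000 in
/-- At the bifurcation value β* (where R0 = 1), the bifurcation constants
a = 2v2·w1·(w2+w3)·β* and b = 2v2·S0·(w2+w3) satisfy w1 < 0, a < 0 and b > 0;
hence the transcritical bifurcation of system (1) at the disease-free
equilibrium when R0 = 1 is forward. -/
theorem forward_transcritical_bifurcation
    (Λ β μ ω ρ ξ δ1 δ2 δ3 p σ θ : ℝ)
    (hΛ : 0 < Λ) (hβ : 0 < β) (hμ : 0 < μ) (hω : 0 < ω) (hρ : 0 < ρ)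
    (hξ : 0 < ξ) (hδ1 : 0 < δ1) (hδ2 : 0 < δ2) (hδ3 : 0 < δ3)
    (hp : p ∈ Ico (0:ℝ) 1) (hσ : σ ∈ Ico (0:ℝ) 1) (hθ : θ ∈ Ico (0:ℝ) 1)
    (S0 βstar v2 w1 w2 w3 a b : ℝ)
    (hS0 : S0 = Λ * (μ * (1 - p) + ξ) / (μ * (μ + ξ)))
    (hβstar : βstar = (μ + ω + δ1) * (μ + δ2) / (S0 * (μ + δ2 + σ * ω)))
    (hv2 : v2 = (μ + σ * ω + δ2) / (μ + ω + δ1))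
    (hw1 : w1 = ξ / μ
        - (μ + ξ) * (μ + ω + δ1) * (μ + ρ + δ3) / (μ * ρ * (1 - σ) * (1 - θ) * ω))
    (hw2 : w2 = (μ + ξ) * (μ + ρ + δ3) / (ρ * (1 - σ) * (1 - θ) * ω))
    (hw3 : w3 = σ * (μ + ξ) * (μ + ρ + δ3) / (ρ * (1 - σ) * (1 - θ) * (μ + δ2) ^ 2))
    (ha : a = 2 * v2 * w1 * (w2 + w3) * βstar)
    (hb : b = 2 * v2 * S0 * (w2 + w3)) :
    w1 < 0 ∧ a < 0 ∧ 0 < b := by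
  obtain ⟨hp0, hp1⟩ := hp
  obtain ⟨hσ0, hσ1⟩ := hσ
  obtain ⟨hθ0, hθ1⟩ := hθ
  have h1σ : 0 < 1 - σ := by linarith
  have h1θ : 0 < 1 - θ := by linarith
  have h1p : 0 < 1 - p := by linarith
  have hS0pos : 0 < S0 := by
    rw [hS0]
    exact div_pos (mul_pos hΛ (by nlinarith [mul_pos hμ h1p])) (mul_pos hμ (by linarith))
  have hv2pos : 0 < v2 := by
    rw [hv2]
    exact div_pos (by nlinarith [mul_nonneg hσ0 hω.le]) (by linarith)
  have hβpos : 0 < βstar := by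
    rw [hβstar]
    exact div_pos (mul_pos (by linarith) (by linarith))
      (mul_pos hS0pos (by nlinarith [mul_nonneg hσ0 hω.le]))
  have hw2pos : 0 < w2 := by
    rw [hw2]; apply div_pos <;> positivity
  have hw3pos : 0 ≤ w3 := by
    rw [hw3]; positivity
  have hw1neg : w1 < 0 := by
    rw [hw1, sub_neg, div_lt_div_iff₀ hμ (by positivity)]
    have h1 : ρ * (1 - σ) * (1 - θ) < μ + ρ + δ3 := by
      nlinarith [mul_nonneg hσ0 h1θ.le, mul_nonneg (mul_nonneg hρ.le hσ0) h1θ.le,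
        mul_nonneg hρ.le hθ0]
    have key : ξ * (ρ * (1 - σ) * (1 - θ)) * ω
        < (μ + ξ) * (μ + ρ + δ3) * (μ + ω + δ1) := by
      apply mul_lt_mul''
        (mul_lt_mul'' (by linarith) h1 hξ.le (by positivity)) (by linarith)
        (by positivity) hω.le
    have key' := mul_lt_mul_of_pos_left key hμ
    ring_nf at key' ⊢
    linarith
  refine ⟨hw1neg, ?_, ?_⟩
  · rw [ha]
    have : 0 < 2 * v2 * (w2 + w3) * βstar := by positivity
    nlinarith
  · rw [hb]; positivity
end

section
/- Let (S, I, Tn, J, R) be a solution of the outbreak model (14) on an interval with S(t) > 0 throughout, and set k = δ2(δ1+ω)/(δ2+σω) and Y(t) = I(t) + ((δ1+ω)/(δ2+σω))·Tn(t). Then Y'(t) = (βS(t) − k)(I(t)+Tn(t)), and the function t ↦ Y(t) + S(t) − (k/β)·ln S(t) is constant along the solution. -/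
open Set

/-- For a solution of the outbreak model (14) with S > 0, setting
k = δ2(δ1+ω)/(δ2+σω) and Y = I + ((δ1+ω)/(δ2+σω))·Tn, one has
Y' = (βS - k)(I + Tn), and t ↦ Y + S - (k/β)·ln S is constant along the solution. -/
theorem conserved_quantity_outbreak
    (β ω ρ δ1 δ2 δ3 σ θ : ℝ)
    (hβ : 0 < β) (hω : 0 < ω) (hρ : 0 < ρ)
    (hδ1 : 0 < δ1) (hδ2 : 0 < δ2) (hδ3 : 0 < δ3)
    (hσ : σ ∈ Icc (0:ℝ) 1) (hθ : θ ∈ Icc (0:ℝ) 1)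
    (s : Set ℝ) (hs : s.OrdConnected)
    (S I Tn J R : ℝ → ℝ)
    (hS : ∀ t ∈ s, HasDerivAt S (-(β * S t * (I t + Tn t))) t)
    (hI : ∀ t ∈ s, HasDerivAt I (β * S t * (I t + Tn t) - (ω + δ1) * I t) t)
    (hTn : ∀ t ∈ s, HasDerivAt Tn (σ * ω * I t - δ2 * Tn t) t)
    (hJ : ∀ t ∈ s, HasDerivAt J ((1 - σ) * (1 - θ) * ω * I t - (δ3 + ρ) * J t) t)
    (hR : ∀ t ∈ s, HasDerivAt R (ρ * J t) t)
    (hSpos : ∀ t ∈ s, 0 < S t)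
    (k : ℝ) (hk : k = δ2 * (δ1 + ω) / (δ2 + σ * ω))
    (Y : ℝ → ℝ) (hY : ∀ t, Y t = I t + (δ1 + ω) / (δ2 + σ * ω) * Tn t) :
    (∀ t ∈ s, HasDerivAt Y ((β * S t - k) * (I t + Tn t)) t)
      ∧ ∀ t1 ∈ s, ∀ t2 ∈ s,
          Y t1 + S t1 - k / β * Real.log (S t1)
            = Y t2 + S t2 - k / β * Real.log (S t2) := by
  have hden : (0:ℝ) < δ2 + σ * ω := by nlinarith [mul_nonneg hσ.1 hω.le]
  have hden' : δ2 + σ * ω ≠ 0 := hden.ne'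
  have hfun : Y = fun t => I t + (δ1 + ω) / (δ2 + σ * ω) * Tn t := funext hY
  have hYd : ∀ t ∈ s, HasDerivAt Y ((β * S t - k) * (I t + Tn t)) t := by
    intro t ht
    have h := (hI t ht).add ((hTn t ht).const_mul ((δ1 + ω) / (δ2 + σ * ω)))
    rw [hfun]
    convert h using 1
    · rfl
    · rfl
    · rfl
    subst hk
    have e : (δ2 + σ * ω) * (δ2 + σ * ω)⁻¹ = 1 := mul_inv_cancel₀ hden'
    linear_combination (-(δ1 + ω) * I t) * e
  refine ⟨hYd, ?_⟩
  set F : ℝ → ℝ := fun t => Y t + S t - k / β * Real.log (S t) with hF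
  have hFd : ∀ t ∈ s, HasDerivAt F 0 t := by
    intro t ht
    have hlog := ((hS t ht).log (hSpos t ht).ne').const_mul (k / β)
    have h := ((hYd t ht).add (hS t ht)).sub hlog
    convert h using 1
    · rfl
    · rfl
    · rfl
    have hS0 : S t ≠ 0 := (hSpos t ht).ne'
    field_simp
    ring
  have key : ∀ a ∈ s, ∀ b ∈ s, a ≤ b → F a = F b := by
    intro a ha b hb hab
    have hsub : Icc a b ⊆ s := hs.out ha hb
    have hcont : ContinuousOn F (Icc a b) := fun x hx =>
      (hFd x (hsub hx)).continuousAt.continuousWithinAt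
    have := constant_of_has_deriv_right_zero hcont
      (fun x hx => ((hFd x (hsub (Ico_subset_Icc_self hx))).hasDerivWithinAt))
      b (right_mem_Icc.2 hab)
    exact this.symm
  intro t1 ht1 t2 ht2
  rcases le_total t1 t2 with h | h
  · exact key t1 ht1 t2 ht2 h
  · exact (key t2 ht2 t1 ht1 h).symm
end

section
/- Let (S, I, Tn, J, R) be a solution of the outbreak model (14) on [0,∞) with S(t) > 0 throughout, and set a = δ2(δ1+ω)/(β(δ2+σω)) and Y(t) = I(t) + ((δ1+ω)/(δ2+σω))·Tn(t). Then for every t ≥ 0, Y(t) ≤ Y(0) + S(0) − a + a·ln(a/S(0)); i.e., the peak size of the epidemic is bounded by Y(0) + S(0) − a + a·ln a − a·ln S(0), with the bound attained when S(t) = a. -/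
open Set

/-- Peak size relation: with a = δ2(δ1+ω)/(β(δ2+σω)) and
Y = I + ((δ1+ω)/(δ2+σω))·Tn, for every t ≥ 0,
Y(t) ≤ Y(0) + S(0) - a + a·ln(a/S(0)), with the bound attained when S(t) = a. -/
theorem peak_size_relation
    (β ω ρ δ1 δ2 δ3 σ θ : ℝ)
    (hβ : 0 < β) (hω : 0 < ω) (hρ : 0 < ρ)
    (hδ1 : 0 < δ1) (hδ2 : 0 < δ2) (hδ3 : 0 < δ3)
    (hσ : σ ∈ Icc (0:ℝ) 1) (hθ : θ ∈ Icc (0:ℝ) 1)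
    (S I Tn J R : ℝ → ℝ)
    (hS : ∀ t ∈ Ici (0:ℝ), HasDerivAt S (-(β * S t * (I t + Tn t))) t)
    (hI : ∀ t ∈ Ici (0:ℝ), HasDerivAt I (β * S t * (I t + Tn t) - (ω + δ1) * I t) t)
    (hTn : ∀ t ∈ Ici (0:ℝ), HasDerivAt Tn (σ * ω * I t - δ2 * Tn t) t)
    (hJ : ∀ t ∈ Ici (0:ℝ), HasDerivAt J ((1 - σ) * (1 - θ) * ω * I t - (δ3 + ρ) * J t) t)
    (hR : ∀ t ∈ Ici (0:ℝ), HasDerivAt R (ρ * J t) t)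
    (hSpos : ∀ t ∈ Ici (0:ℝ), 0 < S t)
    (a : ℝ) (ha : a = δ2 * (δ1 + ω) / (β * (δ2 + σ * ω)))
    (Y : ℝ → ℝ) (hY : ∀ t, Y t = I t + (δ1 + ω) / (δ2 + σ * ω) * Tn t) :
    ∀ t ∈ Ici (0:ℝ),
      Y t ≤ Y 0 + S 0 - a + a * Real.log (a / S 0)
      ∧ (S t = a → Y t = Y 0 + S 0 - a + a * Real.log (a / S 0)) := by

  have hd : 0 < δ2 + σ * ω := by
    have := mul_nonneg hσ.1 hω.le
    linarith
  have hdne : (δ2 + σ * ω) ≠ 0 := hd.ne'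
  have hapos : 0 < a := by rw [ha]; positivity
  set c : ℝ := (δ1 + ω) / (δ2 + σ * ω) with hc
  set F : ℝ → ℝ := fun t => Y t + S t - a * Real.log (S t) with hF
  have hF' : ∀ t ∈ Ici (0:ℝ), HasDerivAt F 0 t := by
    intro t ht
    have hSne : S t ≠ 0 := (hSpos t ht).ne'
    have hYd : HasDerivAt Y
        ((β * S t * (I t + Tn t) - (ω + δ1) * I t) + c * (σ * ω * I t - δ2 * Tn t)) t := by
      have hYeq : Y = fun t => I t + c * Tn t := funext fun t => hY t
      rw [hYeq]
      exact (hI t ht).add ((hTn t ht).const_mul c)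
    have hlog : HasDerivAt (fun t => a * Real.log (S t))
        (a * (-(β * S t * (I t + Tn t)) / S t)) t :=
      ((hS t ht).log hSne).const_mul a
    have hFd := (hYd.add (hS t ht)).sub hlog
    convert hFd using 1
    · rfl
    · rfl
    · rfl
    rw [ha, hc]
    field_simp
    ring_nf
    have hdne' : ω * σ + δ2 ≠ 0 := by linarith
    field_simp
    ring
  have hconst : ∀ t ∈ Ici (0:ℝ), F t = F 0 := by
    intro t ht
    have h := (convex_Ici (0:ℝ)).norm_image_sub_le_of_norm_hasDerivWithin_le
      (f' := fun _ => (0:ℝ)) (C := 0)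
      (fun x hx => (hF' x hx).hasDerivWithinAt)
      (fun x hx => by simp) (mem_Ici.mpr le_rfl) ht
    simp only [Real.norm_eq_abs, zero_mul] at h
    have : |F t - F 0| ≤ 0 := h
    have := abs_nonpos_iff.mp (by linarith [abs_nonneg (F t - F 0)] : |F t - F 0| ≤ 0)
    linarith [sub_eq_zero.mp this]
  intro t ht
  have hS0 : 0 < S 0 := hSpos 0 (mem_Ici.mpr le_rfl)
  have hSt : 0 < S t := hSpos t ht
  have hYt : Y t = Y 0 + S 0 - a * Real.log (S 0) - S t + a * Real.log (S t) := by
    have h := hconst t ht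
    simp only [hF] at h
    linarith
  have hlogdiv : Real.log (a / S 0) = Real.log a - Real.log (S 0) :=
    Real.log_div hapos.ne' hS0.ne'
  constructor
  · -- inequality: a log (S t) - S t ≤ a log a - a
    have h1 : Real.log (S t / a) ≤ S t / a - 1 := Real.log_le_sub_one_of_pos (by positivity)
    rw [Real.log_div hSt.ne' hapos.ne'] at h1
    have h2 : a * Real.log (S t) - a * Real.log a ≤ S t - a := by
      have := mul_le_mul_of_nonneg_left h1 hapos.le
      rw [mul_sub] at this
      calc a * Real.log (S t) - a * Real.log a = a * (Real.log (S t) - Real.log a) := by ring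
        _ ≤ a * (S t / a - 1) := by
            exact mul_le_mul_of_nonneg_left h1 hapos.le
        _ = S t - a := by field_simp
    rw [hYt, hlogdiv]
    linarith
  · intro hSta
    rw [hYt, hSta, hlogdiv]
    ring
end

section
/- Let (S, I, Tn, J, R) be a solution of the outbreak model (14) on [0,∞) such that I and Tn are integrable on [0,∞), S(t) → S∞, I(t) → 0 and Tn(t) → 0 as t → ∞. Then ∫₀^∞ Tn(s) ds = (σω/δ2)·(S(0)+I(0)−S∞)/(ω+δ1) + Tn(0)/δ2. -/
open Set Filter MeasureTheory

/-- If I and Tn are integrable on [0,∞), S(t) → S∞, I(t) → 0 and Tn(t) → 0 as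
t → ∞, then ∫₀^∞ Tn(s) ds = (σω/δ2)·(S(0)+I(0)-S∞)/(ω+δ1) + Tn(0)/δ2. -/
theorem integral_of_false_negatives
    (β ω ρ δ1 δ2 δ3 σ θ : ℝ)
    (hβ : 0 < β) (hω : 0 < ω) (hρ : 0 < ρ)
    (hδ1 : 0 < δ1) (hδ2 : 0 < δ2) (hδ3 : 0 < δ3)
    (hσ : σ ∈ Icc (0:ℝ) 1) (hθ : θ ∈ Icc (0:ℝ) 1)
    (S I Tn J R : ℝ → ℝ)
    (hS : ∀ t ∈ Ici (0:ℝ), HasDerivAt S (-(β * S t * (I t + Tn t))) t)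
    (hI : ∀ t ∈ Ici (0:ℝ), HasDerivAt I (β * S t * (I t + Tn t) - (ω + δ1) * I t) t)
    (hTn : ∀ t ∈ Ici (0:ℝ), HasDerivAt Tn (σ * ω * I t - δ2 * Tn t) t)
    (hJ : ∀ t ∈ Ici (0:ℝ), HasDerivAt J ((1 - σ) * (1 - θ) * ω * I t - (δ3 + ρ) * J t) t)
    (hR : ∀ t ∈ Ici (0:ℝ), HasDerivAt R (ρ * J t) t)
    (hintI : IntegrableOn I (Ioi (0:ℝ)))
    (hintTn : IntegrableOn Tn (Ioi (0:ℝ)))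
    (Sinf : ℝ)
    (hSlim : Tendsto S atTop (nhds Sinf))
    (hIlim : Tendsto I atTop (nhds 0))
    (hTnlim : Tendsto Tn atTop (nhds 0)) :
    ∫ s in Ioi (0:ℝ), Tn s
      = σ * ω / δ2 * ((S 0 + I 0 - Sinf) / (ω + δ1)) + Tn 0 / δ2 := by
  -- Step 1: (S+I)' = -(ω+δ1) I, so ∫ -(ω+δ1) I = Sinf - (S 0 + I 0).
  have hSI : ∀ t ∈ Ici (0:ℝ), HasDerivAt (fun t => S t + I t) (-((ω + δ1) * I t)) t := by
    intro t ht
    have := (hS t ht).add (hI t ht)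
    exact this.congr_deriv (by ring)
  have hint1 : IntegrableOn (fun t => -((ω + δ1) * I t)) (Ioi (0:ℝ)) :=
    ((hintI.const_mul (ω + δ1)).neg)
  have hlim1 : Tendsto (fun t => S t + I t) atTop (nhds (Sinf + 0)) := hSlim.add hIlim
  have eq1 : ∫ t in Ioi (0:ℝ), -((ω + δ1) * I t) = (Sinf + 0) - (S 0 + I 0) :=
    integral_Ioi_of_hasDerivAt_of_tendsto' hSI hint1 hlim1
  have eqI : (ω + δ1) * ∫ t in Ioi (0:ℝ), I t = S 0 + I 0 - Sinf := by
    have : ∫ t in Ioi (0:ℝ), -((ω + δ1) * I t)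
        = -((ω + δ1) * ∫ t in Ioi (0:ℝ), I t) := by
      rw [integral_neg, integral_const_mul]
    rw [this] at eq1
    linarith
  -- Step 2: Tn' = σω I - δ2 Tn, so ∫ (σω I - δ2 Tn) = 0 - Tn 0.
  have hint2 : IntegrableOn (fun t => σ * ω * I t - δ2 * Tn t) (Ioi (0:ℝ)) :=
    (hintI.const_mul (σ * ω)).sub (hintTn.const_mul δ2)
  have eq2 : ∫ t in Ioi (0:ℝ), (σ * ω * I t - δ2 * Tn t) = 0 - Tn 0 :=
    integral_Ioi_of_hasDerivAt_of_tendsto' hTn hint2 hTnlim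
  have split : ∫ t in Ioi (0:ℝ), (σ * ω * I t - δ2 * Tn t)
      = σ * ω * (∫ t in Ioi (0:ℝ), I t) - δ2 * ∫ t in Ioi (0:ℝ), Tn t := by
    rw [integral_sub (hintI.const_mul (σ * ω)) (hintTn.const_mul δ2),
      integral_const_mul, integral_const_mul]
  rw [split] at eq2
  have hωδ1 : ω + δ1 ≠ 0 := by positivity
  have hIval : (∫ t in Ioi (0:ℝ), I t) = (S 0 + I 0 - Sinf) / (ω + δ1) := by
    field_simp
    linarith [eqI]
  rw [hIval] at eq2
  have key : δ2 * ∫ t in Ioi (0:ℝ), Tn t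
      = σ * ω * ((S 0 + I 0 - Sinf) / (ω + δ1)) + Tn 0 := by
    field_simp at eq2 ⊢
    linarith [eq2]
  rw [show σ * ω / δ2 * ((S 0 + I 0 - Sinf) / (ω + δ1)) + Tn 0 / δ2
      = (σ * ω * ((S 0 + I 0 - Sinf) / (ω + δ1)) + Tn 0) / δ2 by ring,
    eq_div_iff hδ2.ne']
  linarith [key]
end

section
/- Final size relation: let (S, I, Tn, J, R) be a solution of the outbreak model (14) on [0,∞) with S(t) > 0 throughout, such that I and Tn are integrable on [0,∞), S(t) → S∞ > 0, I(t) → 0 and Tn(t) → 0 as t → ∞. Then, with c = β(δ2+σω)/(δ2(δ1+ω)) and Y0 = I(0) + ((δ1+ω)/(δ2+σω))·Tn(0), one has ln(S∞/S(0)) = −c·(S(0)+I(0) − S∞) − c·((δ1+ω)/(δ2+σω))·Tn(0), i.e., ln(S∞/S(0)) = −c·(S(0) − S∞) − c·Y0. -/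
open Set Filter MeasureTheory

/-- Final size relation: with c = β(δ2+σω)/(δ2(δ1+ω)) and
Y0 = I(0) + ((δ1+ω)/(δ2+σω))·Tn(0), one has
ln(S∞/S(0)) = -c·(S(0)+I(0)-S∞) - c·((δ1+ω)/(δ2+σω))·Tn(0),
i.e. ln(S∞/S(0)) = -c·(S(0)-S∞) - c·Y0. -/
theorem final_size_relation
    (β ω ρ δ1 δ2 δ3 σ θ : ℝ)
    (hβ : 0 < β) (hω : 0 < ω) (hρ : 0 < ρ)
    (hδ1 : 0 < δ1) (hδ2 : 0 < δ2) (hδ3 : 0 < δ3)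
    (hσ : σ ∈ Icc (0:ℝ) 1) (hθ : θ ∈ Icc (0:ℝ) 1)
    (S I Tn J R : ℝ → ℝ)
    (hS : ∀ t ∈ Ici (0:ℝ), HasDerivAt S (-(β * S t * (I t + Tn t))) t)
    (hI : ∀ t ∈ Ici (0:ℝ), HasDerivAt I (β * S t * (I t + Tn t) - (ω + δ1) * I t) t)
    (hTn : ∀ t ∈ Ici (0:ℝ), HasDerivAt Tn (σ * ω * I t - δ2 * Tn t) t)
    (hJ : ∀ t ∈ Ici (0:ℝ), HasDerivAt J ((1 - σ) * (1 - θ) * ω * I t - (δ3 + ρ) * J t) t)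
    (hR : ∀ t ∈ Ici (0:ℝ), HasDerivAt R (ρ * J t) t)
    (hSpos : ∀ t ∈ Ici (0:ℝ), 0 < S t)
    (hintI : IntegrableOn I (Ioi (0:ℝ)))
    (hintTn : IntegrableOn Tn (Ioi (0:ℝ)))
    (Sinf : ℝ) (hSinf : 0 < Sinf)
    (hSlim : Tendsto S atTop (nhds Sinf))
    (hIlim : Tendsto I atTop (nhds 0))
    (hTnlim : Tendsto Tn atTop (nhds 0))
    (c Y0 : ℝ)
    (hc : c = β * (δ2 + σ * ω) / (δ2 * (δ1 + ω)))
    (hY0 : Y0 = I 0 + (δ1 + ω) / (δ2 + σ * ω) * Tn 0) :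
    Real.log (Sinf / S 0)
        = -(c * (S 0 + I 0 - Sinf)) - c * ((δ1 + ω) / (δ2 + σ * ω)) * Tn 0
      ∧ Real.log (Sinf / S 0) = -(c * (S 0 - Sinf)) - c * Y0 := by
  set A := ∫ t in Ioi (0:ℝ), I t with hA
  set B := ∫ t in Ioi (0:ℝ), Tn t with hB
  -- integral of I
  have h1 : ∫ t in Ioi (0:ℝ), (-(ω + δ1)) * I t = Sinf - (S 0 + I 0) := by
    apply integral_Ioi_of_hasDerivAt_of_tendsto' (f := fun t => S t + I t)
    · intro t ht
      have := (hS t ht).add (hI t ht)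
      convert this using 1
      · rfl
      ring
    · exact (hintI.const_mul _)
    · have := hSlim.add hIlim
      simpa using this
  -- integral of Tn equation
  have h2 : ∫ t in Ioi (0:ℝ), (σ * ω * I t - δ2 * Tn t) = 0 - Tn 0 := by
    apply integral_Ioi_of_hasDerivAt_of_tendsto' (f := Tn) hTn
    · exact (hintI.const_mul _).sub (hintTn.const_mul _)
    · exact hTnlim
  -- integral of log S
  have h3 : ∫ t in Ioi (0:ℝ), (-β) * (I t + Tn t) = Real.log Sinf - Real.log (S 0) := by
    apply integral_Ioi_of_hasDerivAt_of_tendsto' (f := fun t => Real.log (S t))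
    · intro t ht
      have := (hS t ht).log (ne_of_gt (hSpos t ht))
      refine this.congr_deriv ?_
      rw [div_eq_iff (hSpos t ht).ne']
      ring
    · exact ((hintI.add hintTn).const_mul _)
    · exact (Real.continuousAt_log hSinf.ne').tendsto.comp hSlim
  rw [integral_const_mul] at h1 h3
  rw [integral_sub (hintI.const_mul _) (hintTn.const_mul _),
    integral_const_mul, integral_const_mul] at h2
  rw [integral_add hintI hintTn] at h3
  rw [← hA, ← hB] at *
  have hd2 : (0:ℝ) < δ2 + σ * ω := by nlinarith [hσ.1]
  have hlog : Real.log (Sinf / S 0) = Real.log Sinf - Real.log (S 0) :=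
    Real.log_div hSinf.ne' (hSpos 0 self_mem_Ici).ne'
  have hAval : A = (S 0 + I 0 - Sinf) / (ω + δ1) := by
    field_simp
    linarith
  have hBval : B = (σ * ω * A + Tn 0) / δ2 := by
    field_simp
    linarith
  have key : Real.log (Sinf / S 0) = -β * (A + B) := by
    rw [hlog, ← h3]
  constructor
  · rw [key, hAval, hBval, hc, hAval]
    have hd2' : δ2 + ω * σ ≠ 0 := by rw [mul_comm ω σ]; exact hd2.ne'
    field_simp
    ring
  · rw [key, hAval, hBval, hc, hAval, hY0]
    have hd2' : δ2 + ω * σ ≠ 0 := by rw [mul_comm ω σ]; exact hd2.ne'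
    field_simp
    ring
end

section
/- Global stability of the disease-free equilibrium: suppose q = 0 and R0 < 1. Then every solution (S, I, Tn, J, R) of system (1) on [0,∞) with nonnegative initial conditions lying in the invariant region Ω = {(S,I,Tn,J,R) ∈ ℝ₊⁵ : 0 < S+I+Tn+J+R ≤ Λ/μ} converges as t → ∞ to the disease-free equilibrium E0 = (Λ(μ(1-p)+ξ)/(μ(μ+ξ)), 0, 0, 0, pΛ/(μ+ξ)). -/
open Set Filter

lemma decay_aux {f g : ℝ → ℝ} {b T : ℝ}
    (hf : ∀ t ∈ Ici T, HasDerivAt f (g t) t)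
    (hle : ∀ t ∈ Ici T, g t + b * f t ≤ 0) :
    ∀ t ∈ Ici T, f t ≤ f T * Real.exp (b * (T - t)) := by
  intro t ht
  set h : ℝ → ℝ := fun s => f s * Real.exp (b * s) with hh_def
  have hh : ∀ s ∈ Ici T, HasDerivAt h ((g s + b * f s) * Real.exp (b * s)) s := by
    intro s hs
    have h1 : HasDerivAt (fun y : ℝ => b * y) b s := by
      simpa using (hasDerivAt_id s).const_mul b
    have h2 := h1.exp
    have : HasDerivAt (fun y => f y * Real.exp (b * y)) _ s := (hf s hs).mul h2
    convert this using 1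
    ring
  have hanti : AntitoneOn h (Ici T) := by
    apply antitoneOn_of_deriv_nonpos (convex_Ici T)
    · exact fun s hs => ((hh s hs).continuousAt).continuousWithinAt
    · intro s hs
      rw [interior_Ici] at hs
      exact ((hh s (mem_Ici.2 (le_of_lt hs))).differentiableAt).differentiableWithinAt
    · intro s hs
      rw [interior_Ici] at hs
      rw [(hh s (mem_Ici.2 (le_of_lt hs))).deriv]
      exact mul_nonpos_of_nonpos_of_nonneg (hle s (mem_Ici.2 (le_of_lt hs))) (Real.exp_nonneg _)
  have := hanti (self_mem_Ici) ht ht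
  have hpos : (0:ℝ) < Real.exp (b * t) := Real.exp_pos _
  rw [hh_def] at this
  simp only at this
  have h3 : f t ≤ f T * Real.exp (b * T) / Real.exp (b * t) := by
    rw [le_div_iff₀ hpos]; linarith
  calc f t ≤ f T * Real.exp (b * T) / Real.exp (b * t) := h3
    _ = f T * Real.exp (b * (T - t)) := by
        rw [mul_div_assoc, ← Real.exp_sub]; ring_nf

lemma grow_aux {f g : ℝ → ℝ} {b T : ℝ}
    (hf : ∀ t ∈ Ici T, HasDerivAt f (g t) t)
    (hle : ∀ t ∈ Ici T, 0 ≤ g t + b * f t) :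
    ∀ t ∈ Ici T, f T * Real.exp (b * (T - t)) ≤ f t := by
  intro t ht
  have h1 : ∀ s ∈ Ici T, HasDerivAt (fun y => -(f y)) (-(g s)) s := fun s hs => (hf s hs).neg
  have h2 : ∀ s ∈ Ici T, -(g s) + b * (-(f s)) ≤ 0 := fun s hs => by
    have := hle s hs; linarith
  have := decay_aux h1 h2 t ht
  simp only [neg_mul] at this
  linarith

lemma decay_Icc {f g : ℝ → ℝ} {b T0 T1 : ℝ} (hT : T0 ≤ T1)
    (hf : ∀ t ∈ Icc T0 T1, HasDerivAt f (g t) t)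
    (hle : ∀ t ∈ Icc T0 T1, g t + b * f t ≤ 0) :
    f T1 ≤ f T0 * Real.exp (b * (T0 - T1)) := by
  set h : ℝ → ℝ := fun s => f s * Real.exp (b * s) with hh_def
  have hh : ∀ s ∈ Icc T0 T1, HasDerivAt h ((g s + b * f s) * Real.exp (b * s)) s := by
    intro s hs
    have h1 : HasDerivAt (fun y : ℝ => b * y) b s := by
      simpa using (hasDerivAt_id s).const_mul b
    have : HasDerivAt (fun y => f y * Real.exp (b * y)) _ s := (hf s hs).mul h1.exp
    convert this using 1
    ring
  have hanti : AntitoneOn h (Icc T0 T1) := by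
    apply antitoneOn_of_deriv_nonpos (convex_Icc T0 T1)
    · exact fun s hs => ((hh s hs).continuousAt).continuousWithinAt
    · intro s hs
      rw [interior_Icc] at hs
      exact ((hh s (Ioo_subset_Icc_self hs)).differentiableAt).differentiableWithinAt
    · intro s hs
      rw [interior_Icc] at hs
      rw [(hh s (Ioo_subset_Icc_self hs)).deriv]
      exact mul_nonpos_of_nonpos_of_nonneg (hle s (Ioo_subset_Icc_self hs)) (Real.exp_nonneg _)
  have := hanti (left_mem_Icc.2 hT) (right_mem_Icc.2 hT) hT
  have hpos : (0:ℝ) < Real.exp (b * T1) := Real.exp_pos _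
  rw [hh_def] at this
  simp only at this
  have h3 : f T1 ≤ f T0 * Real.exp (b * T0) / Real.exp (b * T1) := by
    rw [le_div_iff₀ hpos]; linarith
  calc f T1 ≤ f T0 * Real.exp (b * T0) / Real.exp (b * T1) := h3
    _ = f T0 * Real.exp (b * (T0 - T1)) := by
        rw [mul_div_assoc, ← Real.exp_sub]; ring_nf

lemma tendsto_exp_decay (c b T : ℝ) (hb : 0 < b) :
    Tendsto (fun t => c * Real.exp (b * (T - t))) atTop (nhds 0) := by
  have h1 : Tendsto (fun t : ℝ => b * (T - t)) atTop atBot := by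
    have h2 : Tendsto (fun t : ℝ => t) atTop atTop := tendsto_id
    have h3 : Tendsto (fun t : ℝ => b * t) atTop atTop := h2.const_mul_atTop hb
    have h4 : Tendsto (fun t : ℝ => -(b * t)) atTop atBot := tendsto_neg_atTop_atBot.comp h3
    have h5 : Tendsto (fun t : ℝ => b * T + -(b * t)) atTop atBot :=
      tendsto_atBot_add_const_left _ (b * T) h4
    refine h5.congr (fun t => by ring)
  have h6 : Tendsto (fun t : ℝ => Real.exp (b * (T - t))) atTop (nhds 0) :=
    Real.tendsto_exp_atBot.comp h1
  simpa using h6.const_mul c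

lemma hasDerivAt_q (x : ℝ) : HasDerivAt (fun y : ℝ => y * min y 0) (2 * min x 0) x := by
  rcases lt_trichotomy x 0 with hx | hx | hx
  · have hq : HasDerivAt (fun y : ℝ => y * y) (2 * x) x := by
      have : HasDerivAt (fun y : ℝ => y * y) _ x := (hasDerivAt_id x).mul (hasDerivAt_id x)
      simpa [two_mul] using this
    have hev : (fun y : ℝ => y * y) =ᶠ[nhds x] (fun y : ℝ => y * min y 0) := by
      filter_upwards [Iio_mem_nhds hx] with y hy
      simp [min_eq_left (le_of_lt (mem_Iio.mp hy))]
    have h2 := hq.congr_of_eventuallyEq hev.symm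
    rwa [min_eq_left hx.le]
  · subst hx
    rw [hasDerivAt_iff_tendsto_slope]
    have hev : (fun y : ℝ => min y 0) =ᶠ[nhdsWithin 0 {(0:ℝ)}ᶜ] slope (fun y : ℝ => y * min y 0) 0 := by
      filter_upwards [self_mem_nhdsWithin] with y hy
      have hy' : y ≠ 0 := hy
      rw [slope_def_field]
      field_simp
      simp
    have h2 : Tendsto (fun y : ℝ => min y 0) (nhdsWithin 0 {(0:ℝ)}ᶜ) (nhds 0) := by
      have hc : Continuous (fun y : ℝ => min y 0) := continuous_id.min continuous_const
      have := hc.tendsto 0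
      simp only [min_self] at this
      simpa using this.mono_left nhdsWithin_le_nhds
    simpa [min_self] using h2.congr' hev
  · have hq : HasDerivAt (fun _ : ℝ => (0:ℝ)) (0:ℝ) x := hasDerivAt_const x 0
    have hev : (fun _ : ℝ => (0:ℝ)) =ᶠ[nhds x] (fun y : ℝ => y * min y 0) := by
      filter_upwards [Ioi_mem_nhds hx] with y hy
      simp [min_eq_right (le_of_lt (mem_Ioi.mp hy))]
    have h2 := hq.congr_of_eventuallyEq hev.symm
    rwa [min_eq_right hx.le, mul_zero]

lemma q_nonneg (x : ℝ) : 0 ≤ x * min x 0 := by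
  rcases le_total x 0 with h | h
  · rw [min_eq_left h]; nlinarith
  · rw [min_eq_right h]; simp

lemma q_eq_sq (x : ℝ) : x * min x 0 = (min x 0)^2 := by
  rcases le_total x 0 with h | h
  · rw [min_eq_left h]; ring
  · rw [min_eq_right h]; ring

lemma nonneg_of_q_eq_zero {x : ℝ} (h : x * min x 0 = 0) : 0 ≤ x := by
  by_contra hc
  push_neg at hc
  rw [min_eq_left hc.le] at h
  nlinarith

lemma two_mul_le (c x y : ℝ) (hc : 0 ≤ c) : 2*c*(x*y) ≤ c*(x^2 + y^2) := by
  have h := sq_nonneg (x - y)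
  rw [sub_sq] at h
  have h2 : 2*(x*y) ≤ x^2 + y^2 := by linarith
  calc 2*c*(x*y) = c*(2*(x*y)) := by ring
    _ ≤ c*(x^2 + y^2) := mul_le_mul_of_nonneg_left h2 hc

set_option maxHeartbeats 2000000 in
lemma nonneg_key (Λ β μ ω ρ ξ δ1 δ2 δ3 p σ θ B : ℝ)
    (hΛ : 0 < Λ) (hβ : 0 < β) (hμ : 0 < μ) (hω : 0 < ω) (hρ : 0 < ρ)
    (hξ : 0 < ξ) (hδ1 : 0 < δ1) (hδ2 : 0 < δ2) (hδ3 : 0 < δ3)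
    (hp0 : 0 ≤ p) (hp1 : p < 1) (hσ0 : 0 ≤ σ) (hσ1 : σ ≤ 1) (hθ0 : 0 ≤ θ) (hθ1 : θ ≤ 1)
    (hB : 0 ≤ B) (s i tn j r : ℝ)
    (hs : |s| ≤ B) (hi : |i| ≤ B) (htn : |tn| ≤ B) :
    2*(min s 0)*((1-p)*Λ - β*s*(i+tn) - μ*s + ξ*r)
    + 2*(min i 0)*(β*s*(i+tn) - (μ+ω+δ1)*i)
    + 2*(min tn 0)*(σ*ω*i - (μ+δ2)*tn)
    + 2*(min j 0)*((1-σ)*(1-θ)*ω*i - (μ+δ3+ρ)*j)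
    + 2*(min r 0)*(p*Λ + ρ*j - (μ+ξ)*r)
    ≤ (8*β*B + ξ + σ*ω + ω + ρ) *
      ((min s 0)^2 + (min i 0)^2 + (min tn 0)^2 + (min j 0)^2 + (min r 0)^2) := by
  set ms := min s 0 with hms
  set mi := min i 0 with hmi
  set mtn := min tn 0 with hmtn
  set mj := min j 0 with hmj
  set mr := min r 0 with hmr
  have hms0 : ms ≤ 0 := min_le_right _ _
  have hmi0 : mi ≤ 0 := min_le_right _ _
  have hmtn0 : mtn ≤ 0 := min_le_right _ _
  have hmj0 : mj ≤ 0 := min_le_right _ _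
  have hmr0 : mr ≤ 0 := min_le_right _ _
  have hmss : ms ≤ s := min_le_left _ _
  have hmii : mi ≤ i := min_le_left _ _
  have hmtnt : mtn ≤ tn := min_le_left _ _
  have hmjj : mj ≤ j := min_le_left _ _
  have hmrr : mr ≤ r := min_le_left _ _
  have hqs : ms * s = ms^2 := by
    rcases le_total s 0 with h | h
    · rw [hms, min_eq_left h]; ring
    · rw [hms, min_eq_right h]; ring
  have hqi : mi * i = mi^2 := by
    rcases le_total i 0 with h | h
    · rw [hmi, min_eq_left h]; ring
    · rw [hmi, min_eq_right h]; ring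
  have hqtn : mtn * tn = mtn^2 := by
    rcases le_total tn 0 with h | h
    · rw [hmtn, min_eq_left h]; ring
    · rw [hmtn, min_eq_right h]; ring
  have hqj : mj * j = mj^2 := by
    rcases le_total j 0 with h | h
    · rw [hmj, min_eq_left h]; ring
    · rw [hmj, min_eq_right h]; ring
  have hqr : mr * r = mr^2 := by
    rcases le_total r 0 with h | h
    · rw [hmr, min_eq_left h]; ring
    · rw [hmr, min_eq_right h]; ring
  have hsB : s ≤ B := (abs_le.mp hs).2
  have hiB : i ≤ B := (abs_le.mp hi).2
  have htnB : tn ≤ B := (abs_le.mp htn).2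
  have hsB' : -B ≤ s := (abs_le.mp hs).1
  have hiB' : -B ≤ i := (abs_le.mp hi).1
  have htnB' : -B ≤ tn := (abs_le.mp htn).1
  have hps : 0 ≤ s - ms := by linarith
  have hpt : 0 ≤ tn - mtn := by linarith
  have hps2 : s - ms ≤ 2*B := by
    rcases le_total s 0 with h | h
    · rw [hms, min_eq_left h]; linarith
    · rw [hms, min_eq_right h]; linarith
  have hpt2 : tn - mtn ≤ 2*B := by
    rcases le_total tn 0 with h | h
    · rw [hmtn, min_eq_left h]; linarith
    · rw [hmtn, min_eq_right h]; linarith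
  -- Term S
  have hTS : 2*ms*((1-p)*Λ - β*s*(i+tn) - μ*s + ξ*r)
      ≤ 4*β*B*ms^2 + ξ*(ms^2 + mr^2) := by
    have p1 : 2*ms*((1-p)*Λ) ≤ 0 :=
      mul_nonpos_of_nonpos_of_nonneg (by linarith)
        (mul_nonneg (by linarith) hΛ.le)
    have p2 : -(2*β)*(ms*s)*(i+tn) ≤ 4*β*B*ms^2 := by
      rw [hqs]
      have h1 : -(i+tn) ≤ 2*B := by linarith
      have h2 : (0:ℝ) ≤ 2*β*ms^2 := by positivity
      calc -(2*β)*ms^2*(i+tn) = 2*β*ms^2 * (-(i+tn)) := by ring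
        _ ≤ 2*β*ms^2 * (2*B) := mul_le_mul_of_nonneg_left h1 h2
        _ = 4*β*B*ms^2 := by ring
    have p3 : -(2*μ)*(ms*s) ≤ 0 := by
      rw [hqs]
      have h2 : (0:ℝ) ≤ 2*μ*ms^2 := by positivity
      linarith
    have p4 : 2*ξ*(ms*r) ≤ ξ*(ms^2 + mr^2) := by
      have h1 : ms*r ≤ ms*mr := mul_le_mul_of_nonpos_left hmrr hms0
      have h2 : 2*ξ*(ms*r) ≤ 2*ξ*(ms*mr) :=
        mul_le_mul_of_nonneg_left h1 (by positivity)
      have h3 := two_mul_le ξ ms mr hξ.le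
      linarith
    have hsplit : 2*ms*((1-p)*Λ - β*s*(i+tn) - μ*s + ξ*r)
        = 2*ms*((1-p)*Λ) + (-(2*β)*(ms*s)*(i+tn)) + (-(2*μ)*(ms*s)) + 2*ξ*(ms*r) := by
      ring
    rw [hsplit]
    linarith
  -- Term I
  have hTI : 2*mi*(β*s*(i+tn) - (μ+ω+δ1)*i)
      ≤ 2*β*B*mi^2 + 2*β*B*(2*mi^2 + ms^2 + mtn^2) := by
    have b1 : 2*β*s*(mi*i) ≤ 2*β*B*mi^2 := by
      rw [hqi]
      have h2 : (0:ℝ) ≤ 2*β*mi^2 := by positivity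
      calc 2*β*s*mi^2 = 2*β*mi^2 * s := by ring
        _ ≤ 2*β*mi^2 * B := mul_le_mul_of_nonneg_left hsB h2
        _ = 2*β*B*mi^2 := by ring
    have inner : mi*(s*tn) ≤ B*(2*mi^2 + ms^2 + mtn^2) := by
      have hmims : 0 ≤ mi*ms := by
        have h := mul_nonneg (neg_nonneg.2 hmi0) (neg_nonneg.2 hms0)
        rw [neg_mul_neg] at h; exact h
      have hmimtn : 0 ≤ mi*mtn := by
        have h := mul_nonneg (neg_nonneg.2 hmi0) (neg_nonneg.2 hmtn0)
        rw [neg_mul_neg] at h; exact h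
      have hmsmtn : 0 ≤ ms*mtn := by
        have h := mul_nonneg (neg_nonneg.2 hms0) (neg_nonneg.2 hmtn0)
        rw [neg_mul_neg] at h; exact h
      have t1 : mi*(ms*mtn) ≤ 0 := mul_nonpos_of_nonpos_of_nonneg hmi0 hmsmtn
      have t2 : (mi*ms)*(tn-mtn) ≤ B*(mi^2 + ms^2) := by
        have h4 : (mi*ms)*(tn-mtn) ≤ (mi*ms)*(2*B) :=
          mul_le_mul_of_nonneg_left hpt2 hmims
        have h5 := two_mul_le B mi ms hB
        have h6 : (mi*ms)*(2*B) = 2*B*(mi*ms) := by ring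
        linarith
      have t3 : (mi*mtn)*(s-ms) ≤ B*(mi^2 + mtn^2) := by
        have h4 : (mi*mtn)*(s-ms) ≤ (mi*mtn)*(2*B) :=
          mul_le_mul_of_nonneg_left hps2 hmimtn
        have h5 := two_mul_le B mi mtn hB
        have h6 : (mi*mtn)*(2*B) = 2*B*(mi*mtn) := by ring
        linarith
      have t4 : mi*((s-ms)*(tn-mtn)) ≤ 0 :=
        mul_nonpos_of_nonpos_of_nonneg hmi0 (mul_nonneg hps hpt)
      have e1 : mi*(s*tn) = mi*(ms*mtn) + (mi*ms)*(tn-mtn) + (mi*mtn)*(s-ms)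
          + mi*((s-ms)*(tn-mtn)) := by ring
      have hBm : 0 ≤ B*mtn^2 := by positivity
      have hBm2 : 0 ≤ B*ms^2 := by positivity
      linarith
    have b2 : 2*β*(mi*(s*tn)) ≤ 2*β*B*(2*mi^2 + ms^2 + mtn^2) := by
      have h2 := mul_le_mul_of_nonneg_left inner (by positivity : (0:ℝ) ≤ 2*β)
      calc 2*β*(mi*(s*tn)) ≤ 2*β*(B*(2*mi^2 + ms^2 + mtn^2)) := h2
        _ = 2*β*B*(2*mi^2 + ms^2 + mtn^2) := by ring
    have b3 : -(2*(μ+ω+δ1))*(mi*i) ≤ 0 := by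
      rw [hqi]
      have h2 : (0:ℝ) ≤ 2*(μ+ω+δ1)*mi^2 := by positivity
      linarith
    have hsplit : 2*mi*(β*s*(i+tn) - (μ+ω+δ1)*i)
        = 2*β*s*(mi*i) + 2*β*(mi*(s*tn)) + (-(2*(μ+ω+δ1))*(mi*i)) := by ring
    rw [hsplit]
    linarith
  -- Term Tn
  have hTTn : 2*mtn*(σ*ω*i - (μ+δ2)*tn) ≤ σ*ω*(mtn^2 + mi^2) := by
    have c1 : mtn*i ≤ mtn*mi := mul_le_mul_of_nonpos_left hmii hmtn0
    have c2 : 2*(σ*ω)*(mtn*i) ≤ 2*(σ*ω)*(mtn*mi) :=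
      mul_le_mul_of_nonneg_left c1 (by positivity)
    have c3 := two_mul_le (σ*ω) mtn mi (by positivity)
    have c4 : -(2*(μ+δ2))*(mtn*tn) ≤ 0 := by
      rw [hqtn]
      have h2 : (0:ℝ) ≤ 2*(μ+δ2)*mtn^2 := by positivity
      linarith
    have hsplit : 2*mtn*(σ*ω*i - (μ+δ2)*tn)
        = 2*(σ*ω)*(mtn*i) + (-(2*(μ+δ2))*(mtn*tn)) := by ring
    rw [hsplit]
    linarith
  -- Term J
  have hTJ : 2*mj*((1-σ)*(1-θ)*ω*i - (μ+δ3+ρ)*j) ≤ ω*(mj^2 + mi^2) := by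
    have d0 : 0 ≤ (1-σ)*(1-θ)*ω :=
      mul_nonneg (mul_nonneg (by linarith) (by linarith)) hω.le
    have d1 : mj*i ≤ mj*mi := mul_le_mul_of_nonpos_left hmii hmj0
    have d2 : 2*((1-σ)*(1-θ)*ω)*(mj*i) ≤ 2*((1-σ)*(1-θ)*ω)*(mj*mi) :=
      mul_le_mul_of_nonneg_left d1 (by linarith)
    have d3 := two_mul_le ((1-σ)*(1-θ)*ω) mj mi d0
    have hσθ : σ*θ ≤ σ := by
      have h := mul_le_mul_of_nonneg_left hθ1 hσ0
      simpa using h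
    have h5 : (1-σ)*(1-θ)*ω ≤ 1*ω := by
      apply mul_le_mul_of_nonneg_right _ hω.le
      linarith [hσθ, hθ0]
    have d4 : ((1-σ)*(1-θ)*ω)*(mj^2 + mi^2) ≤ ω*(mj^2 + mi^2) := by
      have := mul_le_mul_of_nonneg_right h5 (by positivity : (0:ℝ) ≤ mj^2 + mi^2)
      linarith
    have d5 : -(2*(μ+δ3+ρ))*(mj*j) ≤ 0 := by
      rw [hqj]
      have h2 : (0:ℝ) ≤ 2*(μ+δ3+ρ)*mj^2 := by positivity
      linarith
    have hsplit : 2*mj*((1-σ)*(1-θ)*ω*i - (μ+δ3+ρ)*j)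
        = 2*((1-σ)*(1-θ)*ω)*(mj*i) + (-(2*(μ+δ3+ρ))*(mj*j)) := by ring
    rw [hsplit]
    linarith
  -- Term R
  have hTR : 2*mr*(p*Λ + ρ*j - (μ+ξ)*r) ≤ ρ*(mr^2 + mj^2) := by
    have e1 : 2*(p*Λ)*mr ≤ 0 :=
      mul_nonpos_of_nonneg_of_nonpos (by positivity) hmr0
    have e2 : mr*j ≤ mr*mj := mul_le_mul_of_nonpos_left hmjj hmr0
    have e3 : 2*ρ*(mr*j) ≤ 2*ρ*(mr*mj) :=
      mul_le_mul_of_nonneg_left e2 (by positivity)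
    have e4 := two_mul_le ρ mr mj hρ.le
    have e5 : -(2*(μ+ξ))*(mr*r) ≤ 0 := by
      rw [hqr]
      have h2 : (0:ℝ) ≤ 2*(μ+ξ)*mr^2 := by positivity
      linarith
    have hsplit : 2*mr*(p*Λ + ρ*j - (μ+ξ)*r)
        = 2*(p*Λ)*mr + 2*ρ*(mr*j) + (-(2*(μ+ξ))*(mr*r)) := by ring
    rw [hsplit]
    linarith
  have hc1ms : 0 ≤ (β*B)*ms^2 := by positivity
  have hc1mi : 0 ≤ (β*B)*mi^2 := by positivity
  have hc1mtn : 0 ≤ (β*B)*mtn^2 := by positivity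
  have hc1mj : 0 ≤ (β*B)*mj^2 := by positivity
  have hc1mr : 0 ≤ (β*B)*mr^2 := by positivity
  have hc2ms : 0 ≤ ξ*ms^2 := by positivity
  have hc2mi : 0 ≤ ξ*mi^2 := by positivity
  have hc2mtn : 0 ≤ ξ*mtn^2 := by positivity
  have hc2mj : 0 ≤ ξ*mj^2 := by positivity
  have hc2mr : 0 ≤ ξ*mr^2 := by positivity
  have hc3ms : 0 ≤ (σ*ω)*ms^2 := by positivity
  have hc3mi : 0 ≤ (σ*ω)*mi^2 := by positivity
  have hc3mtn : 0 ≤ (σ*ω)*mtn^2 := by positivity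
  have hc3mj : 0 ≤ (σ*ω)*mj^2 := by positivity
  have hc3mr : 0 ≤ (σ*ω)*mr^2 := by positivity
  have hc4ms : 0 ≤ ω*ms^2 := by positivity
  have hc4mi : 0 ≤ ω*mi^2 := by positivity
  have hc4mtn : 0 ≤ ω*mtn^2 := by positivity
  have hc4mj : 0 ≤ ω*mj^2 := by positivity
  have hc4mr : 0 ≤ ω*mr^2 := by positivity
  have hc5ms : 0 ≤ ρ*ms^2 := by positivity
  have hc5mi : 0 ≤ ρ*mi^2 := by positivity
  have hc5mtn : 0 ≤ ρ*mtn^2 := by positivity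
  have hc5mj : 0 ≤ ρ*mj^2 := by positivity
  have hc5mr : 0 ≤ ρ*mr^2 := by positivity
  linarith [hTS, hTI, hTTn, hTJ, hTR]

lemma tendsto_of_linear_ode {b L T0 : ℝ} (hb : 0 < b) {f g e : ℝ → ℝ}
    (hf : ∀ t ∈ Ici T0, HasDerivAt f (g t) t)
    (heq : ∀ t ∈ Ici T0, g t = -(b * (f t - L)) + e t)
    (he : Tendsto e atTop (nhds 0)) :
    Tendsto f atTop (nhds L) := by
  rw [Metric.tendsto_atTop]
  intro ε hε
  have hbe : 0 < b * ε / 4 := by positivity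
  have h1 : ∀ᶠ t in atTop, |e t| < b * ε / 4 := by
    have := Metric.tendsto_nhds.mp he (b * ε / 4) hbe
    simpa [Real.dist_eq] using this
  obtain ⟨T', hT'⟩ := Filter.eventually_atTop.mp (h1.and (eventually_ge_atTop T0))
  set T := max T' T0 with hT_def
  have hTT0 : T0 ≤ T := le_max_right _ _
  have hmem : ∀ t ∈ Ici T, t ∈ Ici T0 := fun t ht => le_trans hTT0 ht
  have hE : ∀ t ∈ Ici T, |e t| < b * ε / 4 := fun t ht =>
    (hT' t (le_trans (le_max_left _ _) ht)).1
  have hε4 : (0:ℝ) < ε / 4 := by positivity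
  -- upper bound
  have hup : ∀ᶠ t in atTop, f t - L ≤ ε / 2 := by
    have hf1 : ∀ t ∈ Ici T, HasDerivAt (fun s => f s - (L + ε/4)) (g t) t :=
      fun t ht => (hf t (hmem t ht)).sub_const _
    have hle1 : ∀ t ∈ Ici T, g t + b * (f t - (L + ε/4)) ≤ 0 := by
      intro t ht
      have h2 := (abs_le.mp (hE t ht).le).2
      have h3 : g t + b * (f t - (L + ε/4)) = e t - b * ε / 4 := by
        rw [heq t (hmem t ht)]; ring
      rw [h3]; linarith
    have hdec := decay_aux hf1 hle1
    have hev : ∀ᶠ t in atTop, (f T - (L + ε/4)) * Real.exp (b * (T - t)) < ε / 4 :=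
      (tendsto_exp_decay (f T - (L + ε/4)) b T hb).eventually (Iio_mem_nhds hε4)
    filter_upwards [hev, eventually_ge_atTop T] with t h4 h5
    have := hdec t h5
    linarith
  -- lower bound
  have hlo : ∀ᶠ t in atTop, L - f t ≤ ε / 2 := by
    have hf2 : ∀ t ∈ Ici T, HasDerivAt (fun s => (L - ε/4) - f s) (-(g t)) t :=
      fun t ht => (hf t (hmem t ht)).const_sub _
    have hle2 : ∀ t ∈ Ici T, -(g t) + b * ((L - ε/4) - f t) ≤ 0 := by
      intro t ht
      have h2 := (abs_le.mp (hE t ht).le).1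
      have h3 : -(g t) + b * ((L - ε/4) - f t) = -(e t) - b * ε / 4 := by
        rw [heq t (hmem t ht)]; ring
      rw [h3]; linarith
    have hdec := decay_aux hf2 hle2
    have hev : ∀ᶠ t in atTop, ((L - ε/4) - f T) * Real.exp (b * (T - t)) < ε / 4 :=
      (tendsto_exp_decay ((L - ε/4) - f T) b T hb).eventually (Iio_mem_nhds hε4)
    filter_upwards [hev, eventually_ge_atTop T] with t h4 h5
    have := hdec t h5
    linarith
  obtain ⟨N, hN⟩ := Filter.eventually_atTop.mp (hup.and hlo)
  refine ⟨N, fun t ht => ?_⟩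
  have := hN t ht
  rw [Real.dist_eq, abs_sub_lt_iff]
  constructor <;> [linarith [this.1]; linarith [this.2]]

lemma eps_exists {c x D : ℝ} (hc : 0 < c) (h : c*x < D) :
    ∃ ε, 0 < ε ∧ c*(x+ε) < D := by
  have hD : 0 < D - c*x := by linarith
  refine ⟨(D - c*x)/(2*c), by positivity, ?_⟩
  have h2 : c*(x + (D - c*x)/(2*c)) = c*x + (D - c*x)/2 := by field_simp
  linarith [h2]

lemma kappa_exists {A δ' sw bs : ℝ} (hδ' : 0 < δ') (hsw : 0 ≤ sw) (hbs : 0 < bs)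
    (h : bs*(δ'+sw) < A*δ') :
    ∃ κ, 0 < κ ∧ 0 < A - bs - κ*sw ∧ 0 < κ*δ' - bs := by
  set g := A*δ' - bs*(δ'+sw) with hg
  have hgpos : 0 < g := by rw [hg]; linarith
  set η := g/(2*(sw+δ')) with hη
  have hηpos : 0 < η := by rw [hη]; positivity
  refine ⟨(bs+η)/δ', by positivity, ?_, ?_⟩
  · have h1 : η*sw < g := by
      rw [hη, div_mul_eq_mul_div, div_lt_iff₀ (by positivity)]
      nlinarith [mul_pos hgpos hδ', mul_nonneg hgpos.le hsw]
    have h2 : (A - bs - ((bs+η)/δ')*sw)*δ' = g - η*sw := by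
      rw [hg]; field_simp; ring
    have h3 : 0 < (A - bs - ((bs+η)/δ')*sw)*δ' := by rw [h2]; linarith
    by_contra h4
    push_neg at h4
    have h5 := mul_nonpos_of_nonpos_of_nonneg h4 hδ'.le
    linarith
  · have h6 : ((bs+η)/δ')*δ' = bs + η := by field_simp
    linarith [h6, hηpos]


/-- Global stability of the disease-free equilibrium: if q = 0 and R0 < 1, every
solution of system (1) with nonnegative initial conditions in the invariant
region Ω = {0 < S+I+Tn+J+R ≤ Λ/μ} converges to the disease-free equilibrium
E0 = (Λ(μ(1-p)+ξ)/(μ(μ+ξ)), 0, 0, 0, pΛ/(μ+ξ)). -/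
theorem global_stability_DFE
    (Λ β μ ω ρ ξ δ1 δ2 δ3 p σ θ : ℝ)
    (hΛ : 0 < Λ) (hβ : 0 < β) (hμ : 0 < μ) (hω : 0 < ω) (hρ : 0 < ρ)
    (hξ : 0 < ξ) (hδ1 : 0 < δ1) (hδ2 : 0 < δ2) (hδ3 : 0 < δ3)
    (hp : p ∈ Ico (0:ℝ) 1) (hσ : σ ∈ Icc (0:ℝ) 1) (hθ : θ ∈ Icc (0:ℝ) 1)
    (R0 : ℝ)
    (hR0 : R0 = β * Λ * (μ * (1 - p) + ξ) / (μ * (μ + ξ) * (μ + ω + δ1))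
        * (1 + σ * ω / (μ + δ2)))
    (hR0lt : R0 < 1)
    (S I Tn J R : ℝ → ℝ)
    (hS : ∀ t ∈ Ici (0:ℝ),
      HasDerivAt S ((1 - p) * Λ - β * S t * (I t + Tn t) - μ * S t + ξ * R t) t)
    (hI : ∀ t ∈ Ici (0:ℝ),
      HasDerivAt I (β * S t * (I t + Tn t) - (μ + ω + δ1) * I t) t)
    (hTn : ∀ t ∈ Ici (0:ℝ),
      HasDerivAt Tn (σ * ω * I t - (μ + δ2) * Tn t) t)
    (hJ : ∀ t ∈ Ici (0:ℝ),
      HasDerivAt J ((1 - σ) * (1 - θ) * ω * I t - (μ + δ3 + ρ) * J t) t)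
    (hR : ∀ t ∈ Ici (0:ℝ),
      HasDerivAt R (p * Λ + ρ * J t - (μ + ξ) * R t) t)
    (hS0 : 0 ≤ S 0) (hI0 : 0 ≤ I 0) (hTn0 : 0 ≤ Tn 0) (hJ0 : 0 ≤ J 0) (hR0' : 0 ≤ R 0)
    (hΩ1 : 0 < S 0 + I 0 + Tn 0 + J 0 + R 0)
    (hΩ2 : S 0 + I 0 + Tn 0 + J 0 + R 0 ≤ Λ / μ) :
    Tendsto S atTop (nhds (Λ * (μ * (1 - p) + ξ) / (μ * (μ + ξ))))
      ∧ Tendsto I atTop (nhds 0)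
      ∧ Tendsto Tn atTop (nhds 0)
      ∧ Tendsto J atTop (nhds 0)
      ∧ Tendsto R atTop (nhds (p * Λ / (μ + ξ))) := by
  obtain ⟨hp0, hp1⟩ := hp
  obtain ⟨hσ0, hσ1⟩ := hσ
  obtain ⟨hθ0, hθ1⟩ := hθ
  -- Step 1: nonnegativity of all components on [0, ∞)
  have nonneg : ∀ T ∈ Ici (0:ℝ),
      0 ≤ S T ∧ 0 ≤ I T ∧ 0 ≤ Tn T ∧ 0 ≤ J T ∧ 0 ≤ R T := by
    intro T hT
    have hsub : Icc (0:ℝ) T ⊆ Ici 0 := fun t ht => ht.1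
    -- bound all functions on [0, T]
    have hSc : ContinuousOn S (Icc 0 T) :=
      fun t ht => ((hS t (hsub ht)).continuousAt).continuousWithinAt
    have hIc : ContinuousOn I (Icc 0 T) :=
      fun t ht => ((hI t (hsub ht)).continuousAt).continuousWithinAt
    have hTnc : ContinuousOn Tn (Icc 0 T) :=
      fun t ht => ((hTn t (hsub ht)).continuousAt).continuousWithinAt
    have hJc : ContinuousOn J (Icc 0 T) :=
      fun t ht => ((hJ t (hsub ht)).continuousAt).continuousWithinAt
    have hRc : ContinuousOn R (Icc 0 T) :=
      fun t ht => ((hR t (hsub ht)).continuousAt).continuousWithinAt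
    obtain ⟨C1, hC1⟩ := isCompact_Icc.exists_bound_of_continuousOn hSc
    obtain ⟨C2, hC2⟩ := isCompact_Icc.exists_bound_of_continuousOn hIc
    obtain ⟨C3, hC3⟩ := isCompact_Icc.exists_bound_of_continuousOn hTnc
    obtain ⟨C4, hC4⟩ := isCompact_Icc.exists_bound_of_continuousOn hJc
    obtain ⟨C5, hC5⟩ := isCompact_Icc.exists_bound_of_continuousOn hRc
    set B := max 0 (max C1 (max C2 (max C3 (max C4 C5)))) with hB_def
    have hB : 0 ≤ B := le_max_left _ _
    have h1B : C1 ≤ B := le_max_of_le_right (le_max_left _ _)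
    have h2B : C2 ≤ B := le_max_of_le_right (le_max_of_le_right (le_max_left _ _))
    have h3B : C3 ≤ B := le_max_of_le_right (le_max_of_le_right
      (le_max_of_le_right (le_max_left _ _)))
    have h4B : C4 ≤ B := le_max_of_le_right (le_max_of_le_right
      (le_max_of_le_right (le_max_of_le_right (le_max_left _ _))))
    have h5B : C5 ≤ B := le_max_of_le_right (le_max_of_le_right
      (le_max_of_le_right (le_max_of_le_right (le_max_right _ _))))
    have hBS : ∀ t ∈ Icc (0:ℝ) T, |S t| ≤ B := fun t ht =>
      le_trans (by simpa [Real.norm_eq_abs] using hC1 t ht) h1B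
    have hBI : ∀ t ∈ Icc (0:ℝ) T, |I t| ≤ B := fun t ht =>
      le_trans (by simpa [Real.norm_eq_abs] using hC2 t ht) h2B
    have hBTn : ∀ t ∈ Icc (0:ℝ) T, |Tn t| ≤ B := fun t ht =>
      le_trans (by simpa [Real.norm_eq_abs] using hC3 t ht) h3B
    set K := 8*β*B + ξ + σ*ω + ω + ρ with hK_def
    -- the quadratic negative-part functional
    have hv : ∀ t ∈ Icc (0:ℝ) T, HasDerivAt
        (fun u => S u * min (S u) 0 + I u * min (I u) 0 + Tn u * min (Tn u) 0
          + J u * min (J u) 0 + R u * min (R u) 0)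
        (2*(min (S t) 0)*((1-p)*Λ - β*S t*(I t+Tn t) - μ*S t + ξ*R t)
          + 2*(min (I t) 0)*(β*S t*(I t+Tn t) - (μ+ω+δ1)*I t)
          + 2*(min (Tn t) 0)*(σ*ω*I t - (μ+δ2)*Tn t)
          + 2*(min (J t) 0)*((1-σ)*(1-θ)*ω*I t - (μ+δ3+ρ)*J t)
          + 2*(min (R t) 0)*(p*Λ + ρ*J t - (μ+ξ)*R t)) t := by
      intro t ht
      have d1 : HasDerivAt (fun u => S u * min (S u) 0)
          (2*(min (S t) 0)*((1-p)*Λ - β*S t*(I t+Tn t) - μ*S t + ξ*R t)) t :=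
        HasDerivAt.comp t (hasDerivAt_q (S t)) (hS t (hsub ht))
      have d2 : HasDerivAt (fun u => I u * min (I u) 0)
          (2*(min (I t) 0)*(β*S t*(I t+Tn t) - (μ+ω+δ1)*I t)) t :=
        HasDerivAt.comp t (hasDerivAt_q (I t)) (hI t (hsub ht))
      have d3 : HasDerivAt (fun u => Tn u * min (Tn u) 0)
          (2*(min (Tn t) 0)*(σ*ω*I t - (μ+δ2)*Tn t)) t :=
        HasDerivAt.comp t (hasDerivAt_q (Tn t)) (hTn t (hsub ht))
      have d4 : HasDerivAt (fun u => J u * min (J u) 0)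
          (2*(min (J t) 0)*((1-σ)*(1-θ)*ω*I t - (μ+δ3+ρ)*J t)) t :=
        HasDerivAt.comp t (hasDerivAt_q (J t)) (hJ t (hsub ht))
      have d5 : HasDerivAt (fun u => R u * min (R u) 0)
          (2*(min (R t) 0)*(p*Λ + ρ*J t - (μ+ξ)*R t)) t :=
        HasDerivAt.comp t (hasDerivAt_q (R t)) (hR t (hsub ht))
      exact (((d1.add d2).add d3).add d4).add d5
    have hle : ∀ t ∈ Icc (0:ℝ) T,
        (2*(min (S t) 0)*((1-p)*Λ - β*S t*(I t+Tn t) - μ*S t + ξ*R t)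
          + 2*(min (I t) 0)*(β*S t*(I t+Tn t) - (μ+ω+δ1)*I t)
          + 2*(min (Tn t) 0)*(σ*ω*I t - (μ+δ2)*Tn t)
          + 2*(min (J t) 0)*((1-σ)*(1-θ)*ω*I t - (μ+δ3+ρ)*J t)
          + 2*(min (R t) 0)*(p*Λ + ρ*J t - (μ+ξ)*R t))
        + (-K) * (S t * min (S t) 0 + I t * min (I t) 0 + Tn t * min (Tn t) 0
          + J t * min (J t) 0 + R t * min (R t) 0) ≤ 0 := by
      intro t ht
      have key := nonneg_key Λ β μ ω ρ ξ δ1 δ2 δ3 p σ θ B hΛ hβ hμ hω hρ hξ hδ1 hδ2 hδ3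
        hp0 hp1 hσ0 hσ1 hθ0 hθ1 hB (S t) (I t) (Tn t) (J t) (R t)
        (hBS t ht) (hBI t ht) (hBTn t ht)
      rw [q_eq_sq (S t), q_eq_sq (I t), q_eq_sq (Tn t), q_eq_sq (J t),
        q_eq_sq (R t), hK_def]
      linarith
    have hdec := decay_Icc hT hv hle
    have hv0 : S 0 * min (S 0) 0 + I 0 * min (I 0) 0 + Tn 0 * min (Tn 0) 0
        + J 0 * min (J 0) 0 + R 0 * min (R 0) 0 = 0 := by
      rw [min_eq_right hS0, min_eq_right hI0, min_eq_right hTn0,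
        min_eq_right hJ0, min_eq_right hR0']
      ring
    rw [hv0, zero_mul] at hdec
    have q1 := q_nonneg (S T)
    have q2 := q_nonneg (I T)
    have q3 := q_nonneg (Tn T)
    have q4 := q_nonneg (J T)
    have q5 := q_nonneg (R T)
    exact ⟨nonneg_of_q_eq_zero (le_antisymm (by linarith) q1),
      nonneg_of_q_eq_zero (le_antisymm (by linarith) q2),
      nonneg_of_q_eq_zero (le_antisymm (by linarith) q3),
      nonneg_of_q_eq_zero (le_antisymm (by linarith) q4),
      nonneg_of_q_eq_zero (le_antisymm (by linarith) q5)⟩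
  -- named equilibrium values
  set Sstar := Λ * (μ * (1 - p) + ξ) / (μ * (μ + ξ)) with hSstar_def
  set Rstar := p * Λ / (μ + ξ) with hRstar_def
  have hμξ : (0:ℝ) < μ + ξ := by linarith
  have hμne : μ ≠ 0 := ne_of_gt hμ
  have hμξne : μ + ξ ≠ 0 := ne_of_gt hμξ
  have ha : (0:ℝ) < μ + ω + δ1 := by linarith
  have hμδ2 : (0:ℝ) < μ + δ2 := by linarith
  -- Step 2: total population bounded by Λ/μ
  have hNle : ∀ t ∈ Ici (0:ℝ), S t + I t + Tn t + J t + R t ≤ Λ/μ := by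
    have hf : ∀ t ∈ Ici (0:ℝ), HasDerivAt
        (fun u => S u + I u + Tn u + J u + R u - Λ/μ)
        (((1-p)*Λ - β*S t*(I t+Tn t) - μ*S t + ξ*R t)
          + (β*S t*(I t+Tn t) - (μ+ω+δ1)*I t)
          + (σ*ω*I t - (μ+δ2)*Tn t)
          + ((1-σ)*(1-θ)*ω*I t - (μ+δ3+ρ)*J t)
          + (p*Λ + ρ*J t - (μ+ξ)*R t)) t := fun t ht =>
      ((((((hS t ht).add (hI t ht)).add (hTn t ht)).add (hJ t ht)).add (hR t ht)).sub_const _)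
    have hle : ∀ t ∈ Ici (0:ℝ),
        (((1-p)*Λ - β*S t*(I t+Tn t) - μ*S t + ξ*R t)
          + (β*S t*(I t+Tn t) - (μ+ω+δ1)*I t)
          + (σ*ω*I t - (μ+δ2)*Tn t)
          + ((1-σ)*(1-θ)*ω*I t - (μ+δ3+ρ)*J t)
          + (p*Λ + ρ*J t - (μ+ξ)*R t))
        + μ * (S t + I t + Tn t + J t + R t - Λ/μ) ≤ 0 := by
      intro t ht
      obtain ⟨h1, h2, h3, h4, h5⟩ := nonneg t ht
      have hid : (((1-p)*Λ - β*S t*(I t+Tn t) - μ*S t + ξ*R t)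
          + (β*S t*(I t+Tn t) - (μ+ω+δ1)*I t)
          + (σ*ω*I t - (μ+δ2)*Tn t)
          + ((1-σ)*(1-θ)*ω*I t - (μ+δ3+ρ)*J t)
          + (p*Λ + ρ*J t - (μ+ξ)*R t))
          + μ * (S t + I t + Tn t + J t + R t - Λ/μ)
          = -(δ1*I t + δ2*Tn t + δ3*J t + (1-σ)*θ*ω*I t) := by
        field_simp
        ring
      rw [hid]
      have n1 : 0 ≤ δ1*I t := mul_nonneg hδ1.le h2
      have n2 : 0 ≤ δ2*Tn t := mul_nonneg hδ2.le h3
      have n3 : 0 ≤ δ3*J t := mul_nonneg hδ3.le h4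
      have n4 : 0 ≤ (1-σ)*θ*ω*I t :=
        mul_nonneg (mul_nonneg (mul_nonneg (by linarith) hθ0) hω.le) h2
      linarith
    have hdec := decay_aux hf hle
    intro t ht
    have h2 : S t + I t + Tn t + J t + R t - Λ/μ
        ≤ (S 0 + I 0 + Tn 0 + J 0 + R 0 - Λ/μ) * Real.exp (μ*(0-t)) := hdec t ht
    have h3 : (S 0 + I 0 + Tn 0 + J 0 + R 0 - Λ/μ) * Real.exp (μ*(0-t)) ≤ 0 :=
      mul_nonpos_of_nonpos_of_nonneg (by linarith) (Real.exp_nonneg _)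
    linarith
  -- Step 3: quantities from R0 < 1
  have hSstar_pos : 0 < Sstar := by
    rw [hSstar_def]
    have h1 : 0 < μ*(1-p)+ξ := by
      have := mul_pos hμ (by linarith : (0:ℝ) < 1-p); linarith
    exact div_pos (mul_pos hΛ h1) (by positivity)
  have hfrom : β*Sstar*(μ+δ2+σ*ω) < (μ+ω+δ1)*(μ+δ2) := by
    have key : β*Sstar*(μ+δ2+σ*ω) = R0 * ((μ+ω+δ1)*(μ+δ2)) := by
      rw [hR0, hSstar_def]
      field_simp
    rw [key]
    have hX : 0 < (μ+ω+δ1)*(μ+δ2) := by positivity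
    calc R0 * ((μ+ω+δ1)*(μ+δ2)) < 1 * ((μ+ω+δ1)*(μ+δ2)) :=
          mul_lt_mul_of_pos_right hR0lt hX
      _ = (μ+ω+δ1)*(μ+δ2) := one_mul _
  obtain ⟨ε0, hε0pos, hε0lt⟩ := eps_exists (c := β*(μ+δ2+σ*ω)) (x := Sstar)
    (D := (μ+ω+δ1)*(μ+δ2)) (by positivity)
    (by calc β*(μ+δ2+σ*ω)*Sstar = β*Sstar*(μ+δ2+σ*ω) := by ring
      _ < _ := hfrom)
  set sbar := Sstar + ε0 with hsbar_def
  have hsbar_pos : 0 < sbar := by rw [hsbar_def]; linarith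
  obtain ⟨κ, hκpos, hα1pos, hα2pos⟩ := kappa_exists (A := μ+ω+δ1) (δ' := μ+δ2)
    (sw := σ*ω) (bs := β*sbar) hμδ2 (by positivity) (mul_pos hβ hsbar_pos)
    (by calc β*sbar*((μ+δ2)+σ*ω) = β*(μ+δ2+σ*ω)*(Sstar+ε0) := by rw [hsbar_def]; ring
      _ < (μ+ω+δ1)*(μ+δ2) := hε0lt)
  -- Step 4: R bounded below, hence S eventually below sbar
  have hΛμR : Λ/μ - Rstar = Sstar := by
    rw [hRstar_def, hSstar_def]
    field_simp
    ring
  have hRlow := grow_aux (f := fun u => R u - Rstar)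
    (g := fun t => p*Λ + ρ*J t - (μ+ξ)*R t) (b := μ+ξ) (T := 0)
    (fun t ht => (hR t ht).sub_const _)
    (by
      intro t ht
      obtain ⟨_, _, _, h4, _⟩ := nonneg t ht
      have hid : (p*Λ + ρ*J t - (μ+ξ)*R t) + (μ+ξ)*(R t - Rstar) = ρ*J t := by
        rw [hRstar_def]; field_simp; ring
      have h5 : 0 ≤ ρ*J t := mul_nonneg hρ.le h4
      show 0 ≤ (p*Λ + ρ*J t - (μ+ξ)*R t) + (μ+ξ)*(R t - Rstar)
      linarith)
  have hS_evt : ∀ᶠ t in atTop, S t ≤ sbar := by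
    have htend := tendsto_exp_decay (R 0 - Rstar) (μ+ξ) 0 hμξ
    have hev : ∀ᶠ t in atTop, (R 0 - Rstar) * Real.exp ((μ+ξ)*(0-t)) ∈ Ioi (-ε0) :=
      htend.eventually (Ioi_mem_nhds (by linarith : -ε0 < (0:ℝ)))
    filter_upwards [hev, eventually_ge_atTop (0:ℝ)] with t h1 h2
    obtain ⟨_, hI', hTn', hJ', _⟩ := nonneg t h2
    have h3 := hNle t h2
    have h4 : (R 0 - Rstar) * Real.exp ((μ+ξ)*(0 - t)) ≤ R t - Rstar := hRlow t h2
    have h1' : -ε0 < (R 0 - Rstar) * Real.exp ((μ+ξ)*(0-t)) := h1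
    rw [hsbar_def]
    linarith [hΛμR]
  obtain ⟨T1, hT1⟩ := eventually_atTop.mp (hS_evt.and (eventually_ge_atTop (0:ℝ)))
  set T2 := max T1 0 with hT2_def
  have hT2mem : ∀ t ∈ Ici T2, S t ≤ sbar ∧ t ∈ Ici (0:ℝ) := fun t ht =>
    ⟨(hT1 t (le_trans (le_max_left _ _) ht)).1, mem_Ici.2 (le_trans (le_max_right _ _) ht)⟩
  -- Step 5: Lyapunov function V = I + κ Tn decays
  set α := min ((μ+ω+δ1) - β*sbar - κ*(σ*ω)) ((κ*(μ+δ2) - β*sbar)/κ) with hα_def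
  have hαpos : 0 < α := lt_min hα1pos (div_pos hα2pos hκpos)
  have hVf : ∀ t ∈ Ici T2, HasDerivAt (fun u => I u + κ * Tn u)
      ((β*S t*(I t+Tn t) - (μ+ω+δ1)*I t) + κ*(σ*ω*I t - (μ+δ2)*Tn t)) t := fun t ht =>
    (hI t (hT2mem t ht).2).add ((hTn t (hT2mem t ht).2).const_mul κ)
  have hVle : ∀ t ∈ Ici T2,
      ((β*S t*(I t+Tn t) - (μ+ω+δ1)*I t) + κ*(σ*ω*I t - (μ+δ2)*Tn t))
        + α*(I t + κ*Tn t) ≤ 0 := by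
    intro t ht
    obtain ⟨hSs, ht0⟩ := hT2mem t ht
    obtain ⟨_, hIt, hTnt, _, _⟩ := nonneg t ht0
    have hb1 : β*S t*(I t+Tn t) ≤ β*sbar*(I t+Tn t) :=
      mul_le_mul_of_nonneg_right (mul_le_mul_of_nonneg_left hSs hβ.le) (by linarith)
    have hαle1 : α ≤ (μ+ω+δ1) - β*sbar - κ*(σ*ω) := min_le_left _ _
    have hc1 : 0 ≤ ((μ+ω+δ1) - β*sbar - κ*(σ*ω) - α) * I t :=
      mul_nonneg (by linarith) hIt
    have hακ : α*κ ≤ κ*(μ+δ2) - β*sbar := by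
      have h6 : α ≤ (κ*(μ+δ2) - β*sbar)/κ := min_le_right _ _
      calc α*κ ≤ ((κ*(μ+δ2) - β*sbar)/κ)*κ :=
            mul_le_mul_of_nonneg_right h6 hκpos.le
        _ = κ*(μ+δ2) - β*sbar := by field_simp
    have hc2 : 0 ≤ (κ*(μ+δ2) - β*sbar - α*κ) * Tn t := mul_nonneg (by linarith) hTnt
    have hexp : ((β*S t*(I t+Tn t) - (μ+ω+δ1)*I t) + κ*(σ*ω*I t - (μ+δ2)*Tn t))
        + α*(I t + κ*Tn t)
        = (β*S t*(I t+Tn t) - β*sbar*(I t+Tn t))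
          - ((μ+ω+δ1) - β*sbar - κ*(σ*ω) - α) * I t
          - (κ*(μ+δ2) - β*sbar - α*κ) * Tn t := by ring
    rw [hexp]
    linarith
  have hVdec := decay_aux hVf hVle
  have hVtend : Tendsto (fun t => I t + κ*Tn t) atTop (nhds 0) := by
    apply tendsto_of_tendsto_of_tendsto_of_le_of_le' tendsto_const_nhds
      (tendsto_exp_decay (I T2 + κ*Tn T2) α T2 hαpos)
    · filter_upwards [eventually_ge_atTop T2] with t ht
      obtain ⟨_, hIt, hTnt, _, _⟩ := nonneg t (hT2mem t ht).2
      have := mul_nonneg hκpos.le hTnt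
      linarith
    · filter_upwards [eventually_ge_atTop T2] with t ht
      exact hVdec t ht
  have hItend : Tendsto I atTop (nhds 0) := by
    apply tendsto_of_tendsto_of_tendsto_of_le_of_le' tendsto_const_nhds hVtend
    · filter_upwards [eventually_ge_atTop T2] with t ht
      exact (nonneg t (hT2mem t ht).2).2.1
    · filter_upwards [eventually_ge_atTop T2] with t ht
      obtain ⟨_, _, hTnt, _, _⟩ := nonneg t (hT2mem t ht).2
      have := mul_nonneg hκpos.le hTnt
      linarith
  have hTntend : Tendsto Tn atTop (nhds 0) := by
    have hdiv : Tendsto (fun t => (I t + κ*Tn t)/κ) atTop (nhds 0) := by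
      simpa using hVtend.div_const κ
    apply tendsto_of_tendsto_of_tendsto_of_le_of_le' tendsto_const_nhds hdiv
    · filter_upwards [eventually_ge_atTop T2] with t ht
      exact (nonneg t (hT2mem t ht).2).2.2.1
    · filter_upwards [eventually_ge_atTop T2] with t ht
      obtain ⟨_, hIt, _, _, _⟩ := nonneg t (hT2mem t ht).2
      rw [le_div_iff₀ hκpos]
      linarith
  -- Step 6: J, R, S converge
  have hJtend : Tendsto J atTop (nhds 0) :=
    tendsto_of_linear_ode (b := μ+δ3+ρ) (L := 0) (T0 := 0)
      (e := fun t => (1-σ)*(1-θ)*ω*I t) (by linarith) hJ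
      (fun t _ => by ring)
      (by simpa using hItend.const_mul ((1-σ)*(1-θ)*ω))
  have hRtend : Tendsto R atTop (nhds Rstar) :=
    tendsto_of_linear_ode (b := μ+ξ) (L := Rstar) (T0 := 0)
      (e := fun t => ρ*J t) hμξ hR
      (fun t _ => by rw [hRstar_def]; field_simp; ring)
      (by simpa using hJtend.const_mul ρ)
  have hSITn : Tendsto (fun t => S t * (I t + Tn t)) atTop (nhds 0) := by
    have hup : Tendsto (fun t => (Λ/μ)*(I t + Tn t)) atTop (nhds 0) := by
      simpa using (hItend.add hTntend).const_mul (Λ/μ)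
    apply tendsto_of_tendsto_of_tendsto_of_le_of_le' tendsto_const_nhds hup
    · filter_upwards [eventually_ge_atTop (0:ℝ)] with t ht
      obtain ⟨hSt, hIt, hTnt, _, _⟩ := nonneg t ht
      exact mul_nonneg hSt (by linarith)
    · filter_upwards [eventually_ge_atTop (0:ℝ)] with t ht
      obtain ⟨hSt, hIt, hTnt, hJt, hRt⟩ := nonneg t ht
      have h3 := hNle t ht
      exact mul_le_mul_of_nonneg_right (by linarith) (by linarith)
  have he_S : Tendsto (fun t => ξ*(R t - Rstar) - β*(S t*(I t+Tn t))) atTop (nhds 0) := by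
    have h1 : Tendsto (fun t => ξ*(R t - Rstar)) atTop (nhds 0) := by
      have h0 : Tendsto (fun t => R t - Rstar) atTop (nhds 0) := by
        simpa using hRtend.sub_const Rstar
      simpa using h0.const_mul ξ
    have h2 : Tendsto (fun t => β*(S t*(I t+Tn t))) atTop (nhds 0) := by
      simpa using hSITn.const_mul β
    simpa using h1.sub h2
  have hStend : Tendsto S atTop (nhds Sstar) :=
    tendsto_of_linear_ode (b := μ) (L := Sstar) (T0 := 0)
      (e := fun t => ξ*(R t - Rstar) - β*(S t*(I t+Tn t))) hμ hS
      (fun t _ => by rw [hSstar_def, hRstar_def]; field_simp; ring) he_S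
  exact ⟨hStend, hItend, hTntend, hJtend, hRtend⟩
end
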